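/- arXiv:0709.3195 — 3 statements merged into one kernel-verified Lean document; each statement's English description precedes it below -/
import Mathlib

section
/- For every smooth φ with compact support on T¹ × [0,T): (i) ∫₀^T ∫_{T¹} b^ε(x + 2t/ε, t) ∂_x φ(x,t) dx dt → 0, (ii) ∫₀^T ∫_{T¹} f^ε(x − 2t/ε, t) ∂_x φ(x,t) dx dt → 0, (iii) ∫₀^T ∫_{T¹} (b^ε(x + 2t/ε, t))² ∂_x φ(x,t) dx dt → 0, and (iv) ∫₀^T ∫_{T¹} (f^ε(x − 2t/ε, t))² ∂_x φ(x,t) dx dt → 0, as ε → 0. -/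
open Filter Topology

/- STATEMENT 8: Vanishing of the oscillating terms: for every smooth test
function φ with compact support in T¹ × [0,T), the integrals of the shifted
filtered unknowns b^ε(x + 2t/ε, t), f^ε(x - 2t/ε, t) and of their squares
against ∂ₓφ tend to 0 as ε → 0.  The torus T¹ = ℝ/2πℤ is modelled by
2π-periodic functions on ℝ.  The families f^ε, b^ε are uniformly bounded,
converge strongly (uniformly in t, in L²(T¹)) to their weak-* limits F, B,
and F, B have zero spatial mean for every t. -/
open Filter Topology MeasureTheory intervalIntegral Set Function

-- Cauchy-Schwarz for interval integrals
lemma my_cs (f g : ℝ → ℝ) (a b : ℝ) (hab : a ≤ b) (hf : Continuous f) (hg : Continuous g) :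
    (∫ x in a..b, f x * g x)^2 ≤ (∫ x in a..b, (f x)^2) * (∫ x in a..b, (g x)^2) := by
  set A := ∫ x in a..b, (f x)^2
  set Bq := ∫ x in a..b, f x * g x
  set Cq := ∫ x in a..b, (g x)^2
  have key : ∀ lam : ℝ, 0 ≤ A * (lam * lam) + (2*Bq) * lam + Cq := by
    intro lam
    have h1 : ∀ x, 0 ≤ (lam * f x + g x)^2 := fun x => sq_nonneg _
    have h2 : (0:ℝ) ≤ ∫ x in a..b, (lam * f x + g x)^2 :=
      intervalIntegral.integral_nonneg hab (fun x _ => h1 x)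
    have h3 : (∫ x in a..b, (lam * f x + g x)^2)
        = A * (lam*lam) + (2*Bq)*lam + Cq := by
      have e1 : ∀ x, (lam * f x + g x)^2
          = (lam*lam) * (f x)^2 + (2*lam) * (f x * g x) + (g x)^2 := by intro x; ring
      simp_rw [e1]
      rw [intervalIntegral.integral_add, intervalIntegral.integral_add,
        intervalIntegral.integral_const_mul, intervalIntegral.integral_const_mul]
      · ring
      · exact (continuous_const.mul (hf.pow 2)).intervalIntegrable _ _
      · exact (continuous_const.mul (hf.mul hg)).intervalIntegrable _ _
      · exact ((continuous_const.mul (hf.pow 2)).add (continuous_const.mul (hf.mul hg))).intervalIntegrable _ _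
      · exact (hg.pow 2).intervalIntegrable _ _
    linarith [h2, h3 ▸ h2]
  have := discrim_le_zero key
  rw [discrim] at this
  nlinarith [this]

-- shift invariance of integral of periodic function
lemma my_shift (g : ℝ → ℝ) (hg : Continuous g) (hp : Function.Periodic g (2*Real.pi)) (s : ℝ) :
    ∫ x in (0:ℝ)..(2*Real.pi), g (x + s) = ∫ x in (0:ℝ)..(2*Real.pi), g x := by
  rw [intervalIntegral.integral_comp_add_right, zero_add]
  have := hp.intervalIntegral_add_eq s 0
  simpa [add_comm] using this

-- bound for periodic-in-x continuous function on ℝ × [0,T]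
lemma my_bound (h : ℝ → ℝ → ℝ) (T : ℝ) (hc : Continuous (Function.uncurry h))
    (hp : ∀ t, Function.Periodic (fun x => h x t) (2*Real.pi)) :
    ∃ M : ℝ, 0 ≤ M ∧ ∀ x : ℝ, ∀ t ∈ Set.Icc 0 T, |h x t| ≤ M := by
  have hcomp : IsCompact (Set.Icc (0:ℝ) (2*Real.pi) ×ˢ Set.Icc (0:ℝ) T) :=
    isCompact_Icc.prod isCompact_Icc
  obtain ⟨M0, hM0⟩ := hcomp.exists_bound_of_continuousOn hc.continuousOn
  refine ⟨max M0 0, le_max_right _ _, fun x t ht => ?_⟩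
  have hpi : (0:ℝ) < 2*Real.pi := by positivity
  set k : ℤ := ⌊x / (2*Real.pi)⌋
  have hx0 : x - k * (2*Real.pi) = Int.fract (x / (2*Real.pi)) * (2*Real.pi) := by
    rw [Int.fract]
    field_simp
    ring
  have hmem : x - k * (2*Real.pi) ∈ Set.Icc (0:ℝ) (2*Real.pi) := by
    rw [hx0]
    constructor
    · nlinarith [Int.fract_nonneg (x / (2*Real.pi))]
    · have := (Int.fract_lt_one (x / (2*Real.pi))).le
      nlinarith [Int.fract_nonneg (x / (2*Real.pi))]
  have heq : h (x - k * (2*Real.pi)) t = h x t := by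
    have := (hp t).sub_int_mul_eq (x := x) k
    simpa using this
  have := hM0 (x - k * (2*Real.pi), t) (Set.mk_mem_prod hmem ht)
  rw [Function.uncurry] at this
  simp only [Real.norm_eq_abs] at this
  rw [heq] at this
  exact this.trans (le_max_left _ _)

-- Fubini for continuous functions on a rectangle
lemma my_fubini (h : ℝ → ℝ → ℝ) (a b c d : ℝ) (hab : a ≤ b) (hcd : c ≤ d)
    (hc : Continuous (Function.uncurry h)) :
    ∫ t in a..b, ∫ x in c..d, h t x = ∫ x in c..d, ∫ t in a..b, h t x := by
  have hint : Integrable (Function.uncurry h)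
      ((volume.restrict (Set.Ioc a b)).prod (volume.restrict (Set.Ioc c d))) := by
    rw [Measure.prod_restrict]
    apply (hc.continuousOn.integrableOn_compact (isCompact_Icc.prod isCompact_Icc)).mono_set
    · exact Set.prod_mono Set.Ioc_subset_Icc_self Set.Ioc_subset_Icc_self
  have := MeasureTheory.integral_integral_swap hint
  simp only [intervalIntegral.integral_of_le hab, intervalIntegral.integral_of_le hcd]
  exact this

lemma my_reduce (y : ℝ) : ∃ y₀ ∈ Set.Icc (0:ℝ) (2*Real.pi),
    ∀ (h : ℝ → ℝ), Function.Periodic h (2*Real.pi) → h y₀ = h y := by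
  have hpi : (0:ℝ) < 2*Real.pi := by positivity
  refine ⟨y - ⌊y / (2*Real.pi)⌋ * (2*Real.pi), ?_, ?_⟩
  · have hx0 : y - ⌊y / (2*Real.pi)⌋ * (2*Real.pi) = Int.fract (y / (2*Real.pi)) * (2*Real.pi) := by
      rw [Int.fract]; field_simp
    rw [hx0]
    constructor
    · nlinarith [Int.fract_nonneg (y / (2*Real.pi))]
    · nlinarith [(Int.fract_lt_one (y / (2*Real.pi))).le, Int.fract_nonneg (y / (2*Real.pi))]
  · intro h hp
    simpa using hp.sub_int_mul_eq (x := y) ⌊y / (2*Real.pi)⌋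

lemma my_ucont (h : ℝ → ℝ → ℝ) (T : ℝ) (hc : Continuous (Function.uncurry h))
    (hp : ∀ t, Function.Periodic (fun x => h x t) (2*Real.pi)) (e : ℝ) (he : 0 < e) :
    ∃ δ > 0, ∀ y : ℝ, ∀ t ∈ Set.Icc 0 T, ∀ t' ∈ Set.Icc 0 T,
      |t - t'| ≤ δ → |h y t - h y t'| ≤ e := by
  have hcomp : IsCompact (Set.Icc (0:ℝ) (2*Real.pi) ×ˢ Set.Icc (0:ℝ) T) :=
    isCompact_Icc.prod isCompact_Icc
  have huc : UniformContinuousOn (Function.uncurry h)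
      (Set.Icc (0:ℝ) (2*Real.pi) ×ˢ Set.Icc (0:ℝ) T) :=
    hcomp.uniformContinuousOn_of_continuous hc.continuousOn
  rw [Metric.uniformContinuousOn_iff] at huc
  obtain ⟨δ, hδ0, hδ⟩ := huc e he
  refine ⟨δ/2, by positivity, fun y t ht t' ht' htt => ?_⟩
  obtain ⟨y₀, hy₀, hy₀eq⟩ := my_reduce y
  have h1 : h y₀ t = h y t := hy₀eq (fun x => h x t) (hp t)
  have h2 : h y₀ t' = h y t' := hy₀eq (fun x => h x t') (hp t')
  rw [← h1, ← h2]
  have hd : dist ((y₀, t) : ℝ × ℝ) (y₀, t') < δ := by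
    rw [Prod.dist_eq]
    simp only [dist_self, Real.dist_eq]
    have h3 : |t - t'| < δ := by linarith
    exact max_lt hδ0 h3
  have := hδ (y₀, t) (Set.mk_mem_prod hy₀ ht) (y₀, t') (Set.mk_mem_prod hy₀ ht') hd
  rw [Real.dist_eq] at this
  exact this.le
lemma my_P (G₀ : ℝ → ℝ → ℝ) (hG₀c : Continuous (Function.uncurry G₀))
    (hG₀p : ∀ t, Function.Periodic (fun x => G₀ x t) (2*Real.pi))
    (hG₀mean : ∀ t, (∫ z in (0:ℝ)..(2*Real.pi), G₀ z t) = 0) (T : ℝ) :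
    ∃ P : ℝ → ℝ → ℝ, (∀ y t, P y t = ∫ u in (0:ℝ)..y, G₀ u t) ∧
      ∃ MP, 0 ≤ MP ∧ ∀ y : ℝ, ∀ t ∈ Set.Icc (0:ℝ) T, |P y t| ≤ MP := by
  have hG₀sect : ∀ t, Continuous (fun y => G₀ y t) := fun t => by
    exact hG₀c.comp (continuous_id.prodMk continuous_const)
  refine ⟨fun y t => ∫ u in (0:ℝ)..y, G₀ u t, fun y t => rfl, ?_⟩
  have hPc : Continuous (Function.uncurry (fun y t => ∫ u in (0:ℝ)..y, G₀ u t)) := by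
    have h1 : Continuous fun p : ℝ × ℝ => ∫ u in (0:ℝ)..p.2, G₀ u p.1 :=
      intervalIntegral.continuous_parametric_primitive_of_continuous
        (f := fun t y => G₀ y t)
        (by exact hG₀c.comp (continuous_snd.prodMk continuous_fst))
    have h2 : (Function.uncurry (fun y t => ∫ u in (0:ℝ)..y, G₀ u t))
        = (fun p : ℝ × ℝ => ∫ u in (0:ℝ)..p.2, G₀ u p.1) ∘ (fun p => (p.2, p.1)) := by
      funext p; rfl
    rw [h2]
    exact h1.comp (continuous_snd.prodMk continuous_fst)
  have hPp : ∀ t, Function.Periodic (fun y => ∫ u in (0:ℝ)..y, G₀ u t) (2*Real.pi) := by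
    intro t y
    show (∫ u in (0:ℝ)..(y + 2*Real.pi), G₀ u t) = ∫ u in (0:ℝ)..y, G₀ u t
    have hadd : (∫ u in (0:ℝ)..y, G₀ u t) + (∫ u in y..(y + 2*Real.pi), G₀ u t)
        = ∫ u in (0:ℝ)..(y + 2*Real.pi), G₀ u t :=
      intervalIntegral.integral_add_adjacent_intervals
        ((hG₀sect t).intervalIntegrable _ _) ((hG₀sect t).intervalIntegrable _ _)
    have hshift : (∫ u in y..(y + 2*Real.pi), G₀ u t) = ∫ u in (0:ℝ)..(2*Real.pi), G₀ u t := by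
      have := (hG₀p t).intervalIntegral_add_eq y 0
      simpa using this
    rw [← hadd, hshift, hG₀mean t, add_zero]
  exact my_bound _ T hPc hPp

set_option maxHeartbeats 1000000 in
lemma my_oscG (T c : ℝ) (hT : 0 < T) (hc : c ≠ 0)
    (G : ℝ → ℝ → ℝ) (hGc : Continuous (Function.uncurry G))
    (hGp : ∀ t, Function.Periodic (fun x => G x t) (2*Real.pi))
    (ψ : ℝ → ℝ → ℝ) (hψc : Continuous (Function.uncurry ψ))
    (hψp : ∀ t, Function.Periodic (fun x => ψ x t) (2*Real.pi))
    (hψ0 : ∀ t, (∫ x in (0:ℝ)..(2*Real.pi), ψ x t) = 0) :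
    Tendsto (fun ε : ℝ => ∫ t in (0:ℝ)..T, ∫ x in (0:ℝ)..(2*Real.pi),
        G (x + c*t/ε) t * ψ x t) (𝓝[>] (0:ℝ)) (𝓝 0) := by
  have hπ : (0:ℝ) < 2*Real.pi := by positivity
  -- the mean of G and the zero-mean part G₀
  have hmc : Continuous (fun t => (∫ z in (0:ℝ)..(2*Real.pi), G z t) / (2*Real.pi)) := by
    apply Continuous.div_const
    exact intervalIntegral.continuous_parametric_intervalIntegral_of_continuous'
      (f := fun t z => G z t)
      (by exact hGc.comp (continuous_snd.prodMk continuous_fst)) 0 (2*Real.pi)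
  set m : ℝ → ℝ := fun t => (∫ z in (0:ℝ)..(2*Real.pi), G z t) / (2*Real.pi) with hmdef
  set G₀ : ℝ → ℝ → ℝ := fun y t => G y t - m t with hG₀def
  have hG₀c : Continuous (Function.uncurry G₀) := by
    exact (hGc.sub (hmc.comp continuous_snd))
  have hGsect : ∀ t, Continuous (fun y => G y t) := fun t => by
    exact hGc.comp (continuous_id.prodMk continuous_const)
  have hG₀sect : ∀ t, Continuous (fun y => G₀ y t) := fun t =>
    hG₀c.comp (continuous_id.prodMk continuous_const)
  have hψsect : ∀ t, Continuous (fun x => ψ x t) := fun t =>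
    hψc.comp (continuous_id.prodMk continuous_const)
  have hG₀p : ∀ t, Function.Periodic (fun x => G₀ x t) (2*Real.pi) := by
    intro t x
    have h := hGp t x
    simp only at h
    simp only [hG₀def, h]
  have hG₀mean : ∀ t, (∫ z in (0:ℝ)..(2*Real.pi), G₀ z t) = 0 := by
    intro t
    simp only [hG₀def]
    rw [intervalIntegral.integral_sub ((hGsect t).intervalIntegrable _ _)
      (intervalIntegrable_const), intervalIntegral.integral_const]
    simp only [hmdef, smul_eq_mul, sub_zero]
    field_simp
    ring
  -- reduce the statement to G₀
  have funeq : ∀ ε : ℝ, (∫ t in (0:ℝ)..T, ∫ x in (0:ℝ)..(2*Real.pi), G (x + c*t/ε) t * ψ x t)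
      = ∫ t in (0:ℝ)..T, ∫ x in (0:ℝ)..(2*Real.pi), G₀ (x + c*t/ε) t * ψ x t := by
    intro ε
    apply intervalIntegral.integral_congr
    intro t _
    have h1 : ∀ x : ℝ, G (x + c*t/ε) t * ψ x t
        = G₀ (x + c*t/ε) t * ψ x t + m t * ψ x t := by intro x; simp [hG₀def]; ring
    simp only [h1]
    rw [intervalIntegral.integral_add, intervalIntegral.integral_const_mul, hψ0 t, mul_zero,
      add_zero]
    · exact (((hG₀sect t).comp (continuous_id.add continuous_const)).mul
        (hψsect t)).intervalIntegrable _ _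
    · exact (continuous_const.mul (hψsect t)).intervalIntegrable _ _
  simp only [funeq]
  -- bounds
  obtain ⟨Mψ, hMψ0, hMψ⟩ := my_bound ψ T hψc hψp
  obtain ⟨MG, hMG0, hMG⟩ := my_bound G₀ T hG₀c hG₀p
  obtain ⟨P, hPeq, MP, hMP0, hMPb⟩ := my_P G₀ hG₀c hG₀p hG₀mean T
  -- the ε-δ argument
  rw [Metric.tendsto_nhdsWithin_nhds]
  intro e he
  -- modulus of continuity constants
  have hden : (0:ℝ) < 4*Real.pi*T*(Mψ+MG) + 1 := by
    have h0 : (0:ℝ) ≤ 4*Real.pi*T*(Mψ+MG) :=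
      mul_nonneg (by positivity) (by linarith)
    linarith
  set e1 : ℝ := e / (4*Real.pi*T*(Mψ+MG) + 1) with he1def
  have he1 : 0 < e1 := div_pos he hden
  obtain ⟨δG, hδG0, hδG⟩ := my_ucont G₀ T hG₀c hG₀p e1 he1
  obtain ⟨δψ, hδψ0, hδψ⟩ := my_ucont ψ T hψc hψp e1 he1
  set δ : ℝ := min δG δψ with hδdef
  have hδ0 : 0 < δ := lt_min hδG0 hδψ0
  obtain ⟨N, hNgt⟩ := exists_nat_gt (T/δ)
  have hNpos : 0 < (N:ℝ) := lt_trans (div_pos hT hδ0) hNgt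
  set Δ : ℝ := T / N with hΔdef
  have hΔ0 : 0 < Δ := div_pos hT hNpos
  have hΔδ : Δ ≤ δ := by
    rw [hΔdef, div_le_iff₀ hNpos]
    have := (div_lt_iff₀ hδ0).mp hNgt
    nlinarith
  set a : ℕ → ℝ := fun k => k * Δ with hadef
  have ha0 : a 0 = 0 := by simp [hadef]
  have haN : a N = T := by
    simp only [hadef, hΔdef]
    field_simp
  have hamono : ∀ k : ℕ, a k ≤ a (k+1) := by
    intro k; simp only [hadef]; push_cast; nlinarith
  have hastep : ∀ k : ℕ, a (k+1) - a k = Δ := by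
    intro k; simp only [hadef]; push_cast; ring
  have hamem : ∀ k : ℕ, k ≤ N → a k ∈ Set.Icc (0:ℝ) T := by
    intro k hk
    constructor
    · simp only [hadef]; positivity
    · rw [← haN]; simp only [hadef]
      have : (k:ℝ) ≤ N := by exact_mod_cast hk
      nlinarith
  -- the small parameter threshold
  set D : ℝ := (N:ℝ) * (4*Real.pi) * MP * Mψ with hDdef
  have hD0 : 0 ≤ D := by
    apply mul_nonneg (mul_nonneg (mul_nonneg (by positivity) (by positivity)) hMP0) hMψ0
  have habs : 0 < |c| := abs_pos.mpr hc
  set ε₀ : ℝ := (e/4) * |c| / (D + 1) with hε₀def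
  have hε₀pos : 0 < ε₀ := by
    apply div_pos (mul_pos (by linarith) habs) (by linarith)
  refine ⟨ε₀, hε₀pos, ?_⟩
  intro ε hε hdist
  have hεpos : 0 < ε := hε
  have hεlt : ε < ε₀ := by
    rw [Real.dist_eq, sub_zero, abs_of_pos hεpos] at hdist; exact hdist
  have hs : c/ε ≠ 0 := div_ne_zero hc (ne_of_gt hεpos)
  rw [Real.dist_eq, sub_zero]
  show |∫ t in (0:ℝ)..T, ∫ x in (0:ℝ)..(2*Real.pi), G₀ (x + c*t/ε) t * ψ x t| < e
  -- continuity of the inner integrals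
  have hIinc : ∀ τ : ℝ, Continuous (fun t => ∫ x in (0:ℝ)..(2*Real.pi),
      G₀ (x + c*t/ε) τ * ψ x τ) := by
    intro τ
    apply intervalIntegral.continuous_parametric_intervalIntegral_of_continuous'
      (f := fun t x => G₀ (x + c*t/ε) τ * ψ x τ)
    have h2 : (Function.uncurry (fun t x => G₀ (x + c*t/ε) τ * ψ x τ))
        = fun p : ℝ × ℝ => G₀ (p.2 + c*p.1/ε) τ * ψ p.2 τ := by funext p; rfl
    rw [h2]
    exact ((hG₀sect τ).comp (continuous_snd.add
      ((continuous_const.mul continuous_fst).div_const ε))).mul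
      ((hψsect τ).comp continuous_snd)
  have hIc : Continuous (fun t => ∫ x in (0:ℝ)..(2*Real.pi), G₀ (x + c*t/ε) t * ψ x t) := by
    apply intervalIntegral.continuous_parametric_intervalIntegral_of_continuous'
      (f := fun t x => G₀ (x + c*t/ε) t * ψ x t)
    have h2 : (Function.uncurry (fun t x => G₀ (x + c*t/ε) t * ψ x t))
        = fun p : ℝ × ℝ => G₀ (p.2 + c*p.1/ε) p.1 * ψ p.2 p.1 := by funext p; rfl
    rw [h2]
    exact (hG₀c.comp ((continuous_snd.add
      ((continuous_const.mul continuous_fst).div_const ε)).prodMk continuous_fst)).mul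
      (hψc.comp (continuous_snd.prodMk continuous_fst))
  -- split the time interval
  have hsum := intervalIntegral.sum_integral_adjacent_intervals (μ := MeasureTheory.volume) (a := a) (n := N)
    (f := fun t => ∫ x in (0:ℝ)..(2*Real.pi), G₀ (x + c*t/ε) t * ψ x t)
    (fun k _ => hIc.intervalIntegrable _ _)
  rw [ha0, haN] at hsum
  rw [← hsum]
  -- bound each piece
  set C1 : ℝ := 2*Real.pi*(e1*Mψ + MG*e1) with hC1def
  set C2 : ℝ := (ε/|c|)*(2*MP)*Mψ*(2*Real.pi) with hC2def
  have hpiece : ∀ k, k < N → |∫ t in a k..a (k+1), ∫ x in (0:ℝ)..(2*Real.pi),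
      G₀ (x + c*t/ε) t * ψ x t| ≤ C1*Δ + C2 := by
    intro k hk
    have hkT : a k ∈ Set.Icc (0:ℝ) T := hamem k (le_of_lt hk)
    have hk1T : a (k+1) ∈ Set.Icc (0:ℝ) T := hamem (k+1) hk
    -- step 1: freeze the time in the slow variables
    have hstep1 : |(∫ t in a k..a (k+1), ∫ x in (0:ℝ)..(2*Real.pi), G₀ (x + c*t/ε) t * ψ x t)
        - ∫ t in a k..a (k+1), ∫ x in (0:ℝ)..(2*Real.pi), G₀ (x + c*t/ε) (a k) * ψ x (a k)|
        ≤ C1 * Δ := by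
      rw [← intervalIntegral.integral_sub (hIc.intervalIntegrable _ _)
        ((hIinc (a k)).intervalIntegrable _ _)]
      have hb := intervalIntegral.norm_integral_le_of_norm_le_const (C := C1)
        (f := fun t => (∫ x in (0:ℝ)..(2*Real.pi), G₀ (x + c*t/ε) t * ψ x t)
          - ∫ x in (0:ℝ)..(2*Real.pi), G₀ (x + c*t/ε) (a k) * ψ x (a k))
        (a := a k) (b := a (k+1)) ?_
      · rw [Real.norm_eq_abs] at hb
        calc _ ≤ C1 * |a (k+1) - a k| := hb
        _ = C1 * Δ := by rw [hastep k, abs_of_pos hΔ0]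
      · intro t ht
        rw [Set.uIoc_of_le (hamono k)] at ht
        have htIcc : t ∈ Set.Icc (0:ℝ) T := ⟨le_trans hkT.1 ht.1.le, le_trans ht.2 hk1T.2⟩
        have htδ : |t - a k| ≤ δ := by
          rw [abs_of_nonneg (by linarith [ht.1.le] : (0:ℝ) ≤ t - a k)]
          have := hastep k
          linarith [ht.2]
        have hcont1 : Continuous (fun x : ℝ => G₀ (x + c*t/ε) t * ψ x t) := by
          exact ((hG₀sect t).comp (continuous_id.add continuous_const)).mul (hψsect t)
        have hcont2 : Continuous (fun x : ℝ => G₀ (x + c*t/ε) (a k) * ψ x (a k)) := by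
          exact ((hG₀sect (a k)).comp (continuous_id.add continuous_const)).mul (hψsect (a k))
        show |(∫ x in (0:ℝ)..(2*Real.pi), G₀ (x + c*t/ε) t * ψ x t)
          - ∫ x in (0:ℝ)..(2*Real.pi), G₀ (x + c*t/ε) (a k) * ψ x (a k)| ≤ C1
        rw [← intervalIntegral.integral_sub (hcont1.intervalIntegrable _ _)
          (hcont2.intervalIntegrable _ _)]
        have hbd := intervalIntegral.norm_integral_le_of_norm_le_const
          (C := e1*Mψ + MG*e1)
          (f := fun x => G₀ (x + c*t/ε) t * ψ x t - G₀ (x + c*t/ε) (a k) * ψ x (a k))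
          (a := (0:ℝ)) (b := 2*Real.pi) ?_
        · rw [Real.norm_eq_abs] at hbd
          calc _ ≤ (e1*Mψ + MG*e1) * |2*Real.pi - 0| := hbd
          _ = C1 := by rw [hC1def, sub_zero, abs_of_pos hπ]; ring
        · intro x _
          rw [Real.norm_eq_abs]
          have hA : |G₀ (x + c*t/ε) t - G₀ (x + c*t/ε) (a k)| ≤ e1 :=
            hδG _ t htIcc (a k) hkT (le_trans htδ (min_le_left _ _))
          have hB : |ψ x t - ψ x (a k)| ≤ e1 :=
            hδψ _ t htIcc (a k) hkT (le_trans htδ (min_le_right _ _))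
          have hψb : |ψ x t| ≤ Mψ := hMψ x t htIcc
          have hGb : |G₀ (x + c*t/ε) (a k)| ≤ MG := hMG _ (a k) hkT
          calc |G₀ (x + c*t/ε) t * ψ x t - G₀ (x + c*t/ε) (a k) * ψ x (a k)|
              = |(G₀ (x + c*t/ε) t - G₀ (x + c*t/ε) (a k)) * ψ x t
                + G₀ (x + c*t/ε) (a k) * (ψ x t - ψ x (a k))| := by ring_nf
          _ ≤ |(G₀ (x + c*t/ε) t - G₀ (x + c*t/ε) (a k)) * ψ x t|
                + |G₀ (x + c*t/ε) (a k) * (ψ x t - ψ x (a k))| := abs_add_le _ _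
          _ = |G₀ (x + c*t/ε) t - G₀ (x + c*t/ε) (a k)| * |ψ x t|
                + |G₀ (x + c*t/ε) (a k)| * |ψ x t - ψ x (a k)| := by rw [abs_mul, abs_mul]
          _ ≤ e1*Mψ + MG*e1 := by
              apply add_le_add
              · exact mul_le_mul hA hψb (abs_nonneg _) he1.le
              · exact mul_le_mul hGb hB (abs_nonneg _) hMG0
    -- step 2: the frozen integral is small by oscillation
    have hstep2 : |∫ t in a k..a (k+1), ∫ x in (0:ℝ)..(2*Real.pi),
        G₀ (x + c*t/ε) (a k) * ψ x (a k)| ≤ C2 := by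
      rw [my_fubini (fun t x => G₀ (x + c*t/ε) (a k) * ψ x (a k)) (a k) (a (k+1)) 0 (2*Real.pi)
        (hamono k) (by positivity) (by
          have h2 : (Function.uncurry (fun t x => G₀ (x + c*t/ε) (a k) * ψ x (a k)))
              = fun p : ℝ × ℝ => G₀ (p.2 + c*p.1/ε) (a k) * ψ p.2 (a k) := by funext p; rfl
          rw [h2]
          exact ((hG₀sect (a k)).comp (continuous_snd.add
            ((continuous_const.mul continuous_fst).div_const ε))).mul
            ((hψsect (a k)).comp continuous_snd))]
      have hval : ∀ x : ℝ, (∫ t in a k..a (k+1), G₀ (x + c*t/ε) (a k) * ψ x (a k))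
          = ((c/ε)⁻¹ * (P (x + c/ε * a (k+1)) (a k) - P (x + c/ε * a k) (a k))) * ψ x (a k) := by
        intro x
        rw [intervalIntegral.integral_mul_const]
        congr 1
        have harg : ∀ t : ℝ, G₀ (x + c*t/ε) (a k) = (fun u => G₀ u (a k)) (x + (c/ε)*t) := by
          intro t
          have : c*t/ε = (c/ε)*t := by ring
          rw [this]
        simp only [harg]
        rw [intervalIntegral.integral_comp_add_mul (fun u => G₀ u (a k)) hs x]
        rw [smul_eq_mul]
        congr 1
        rw [← intervalIntegral.integral_interval_sub_left
          (((hG₀sect (a k)).intervalIntegrable _ _)) (((hG₀sect (a k)).intervalIntegrable _ _))]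
        rw [hPeq, hPeq]
      have hb2 := intervalIntegral.norm_integral_le_of_norm_le_const
        (C := (ε/|c|)*(2*MP)*Mψ)
        (f := fun x => ∫ t in a k..a (k+1), G₀ (x + c*t/ε) (a k) * ψ x (a k))
        (a := (0:ℝ)) (b := 2*Real.pi) ?_
      · rw [Real.norm_eq_abs] at hb2
        calc _ ≤ (ε/|c|)*(2*MP)*Mψ * |2*Real.pi - 0| := hb2
        _ = C2 := by rw [hC2def, sub_zero, abs_of_pos hπ]
      · intro x _
        show |∫ t in a k..a (k+1), G₀ (x + c*t/ε) (a k) * ψ x (a k)| ≤ (ε/|c|)*(2*MP)*Mψ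
        rw [hval x]
        have hinv : |(c/ε)⁻¹| = ε/|c| := by
          rw [abs_inv, abs_div, abs_of_pos hεpos, inv_div]
        calc |((c/ε)⁻¹ * (P (x + c/ε * a (k+1)) (a k) - P (x + c/ε * a k) (a k))) * ψ x (a k)|
            = |(c/ε)⁻¹| * |P (x + c/ε * a (k+1)) (a k) - P (x + c/ε * a k) (a k)| * |ψ x (a k)| := by
              rw [abs_mul, abs_mul]
        _ ≤ (ε/|c|) * (2*MP) * Mψ := by
            have h1 : |P (x + c/ε * a (k+1)) (a k) - P (x + c/ε * a k) (a k)| ≤ 2*MP := by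
              calc |P (x + c/ε * a (k+1)) (a k) - P (x + c/ε * a k) (a k)|
                  ≤ |P (x + c/ε * a (k+1)) (a k)| + |P (x + c/ε * a k) (a k)| := abs_sub _ _
              _ ≤ MP + MP := add_le_add (hMPb _ _ hkT) (hMPb _ _ hkT)
              _ = 2*MP := by ring
            have h2 : |ψ x (a k)| ≤ Mψ := hMψ _ _ hkT
            have h3 : (0:ℝ) ≤ ε/|c| := by positivity
            rw [hinv]
            have h4 : (ε/|c|) * |P (x + c/ε * a (k+1)) (a k) - P (x + c/ε * a k) (a k)|
                ≤ (ε/|c|) * (2*MP) := mul_le_mul_of_nonneg_left h1 h3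
            have h5 : (0:ℝ) ≤ (ε/|c|) * (2*MP) := mul_nonneg h3 (by linarith)
            calc (ε/|c|) * |P (x + c/ε * a (k+1)) (a k) - P (x + c/ε * a k) (a k)| * |ψ x (a k)|
                ≤ (ε/|c|) * (2*MP) * |ψ x (a k)| :=
                  mul_le_mul_of_nonneg_right h4 (abs_nonneg _)
            _ ≤ (ε/|c|) * (2*MP) * Mψ := mul_le_mul_of_nonneg_left h2 h5
    calc |∫ t in a k..a (k+1), ∫ x in (0:ℝ)..(2*Real.pi), G₀ (x + c*t/ε) t * ψ x t|
        ≤ |(∫ t in a k..a (k+1), ∫ x in (0:ℝ)..(2*Real.pi), G₀ (x + c*t/ε) t * ψ x t)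
          - ∫ t in a k..a (k+1), ∫ x in (0:ℝ)..(2*Real.pi), G₀ (x + c*t/ε) (a k) * ψ x (a k)|
          + |∫ t in a k..a (k+1), ∫ x in (0:ℝ)..(2*Real.pi), G₀ (x + c*t/ε) (a k) * ψ x (a k)| :=
          by
            rw [← sub_add_cancel (∫ t in a k..a (k+1), ∫ x in (0:ℝ)..(2*Real.pi),
              G₀ (x + c*t/ε) t * ψ x t) (∫ t in a k..a (k+1), ∫ x in (0:ℝ)..(2*Real.pi),
              G₀ (x + c*t/ε) (a k) * ψ x (a k))]
            exact (abs_add_le _ _).trans (by rw [sub_add_cancel])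
    _ ≤ C1*Δ + C2 := add_le_add hstep1 hstep2
  have hsumbound : |∑ k ∈ Finset.range N, ∫ t in a k..a (k+1), ∫ x in (0:ℝ)..(2*Real.pi),
      G₀ (x + c*t/ε) t * ψ x t| ≤ (N:ℝ) * (C1*Δ + C2) := by
    calc |∑ k ∈ Finset.range N, ∫ t in a k..a (k+1), ∫ x in (0:ℝ)..(2*Real.pi),
        G₀ (x + c*t/ε) t * ψ x t|
        ≤ ∑ k ∈ Finset.range N, |∫ t in a k..a (k+1), ∫ x in (0:ℝ)..(2*Real.pi),
          G₀ (x + c*t/ε) t * ψ x t| := Finset.abs_sum_le_sum_abs _ _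
    _ ≤ ∑ _k ∈ Finset.range N, (C1*Δ + C2) :=
        Finset.sum_le_sum (fun k hk => hpiece k (Finset.mem_range.mp hk))
    _ = (N:ℝ) * (C1*Δ + C2) := by
        rw [Finset.sum_const, Finset.card_range, nsmul_eq_mul]
  have hNΔ : (N:ℝ) * Δ = T := by
    rw [hΔdef]; field_simp
  have hC1T : C1 * T ≤ e/2 := by
    have hX : C1 * T = 2*Real.pi*T*(Mψ+MG) * e1 := by rw [hC1def]; ring
    rw [hX]
    have he1e : e1 * (4*Real.pi*T*(Mψ+MG) + 1) = e := by
      rw [he1def]; field_simp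
    nlinarith [he1.le, mul_nonneg (mul_nonneg
      (by positivity : (0:ℝ) ≤ 2*Real.pi) hT.le) (by linarith : (0:ℝ) ≤ Mψ+MG)]
  have hNC2 : (N:ℝ) * C2 ≤ e/4 := by
    have h2 : ε * (D + 1) < e/4 * |c| := by
      rw [hε₀def] at hεlt
      exact (lt_div_iff₀ (by linarith : (0:ℝ) < D+1)).mp hεlt
    have h3 : D * ε ≤ e/4 * |c| := by nlinarith [hεpos.le, hD0]
    have h4 : (N:ℝ) * C2 = D * ε / |c| := by
      rw [hC2def, hDdef]; field_simp; ring
    rw [h4, div_le_iff₀ habs]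
    calc D * ε ≤ e/4 * |c| := h3
    _ = e / 4 * |c| := by ring
  have hfinal : |∑ k ∈ Finset.range N, ∫ t in a k..a (k+1), ∫ x in (0:ℝ)..(2*Real.pi),
      G₀ (x + c*t/ε) t * ψ x t| < e := by
    calc |∑ k ∈ Finset.range N, ∫ t in a k..a (k+1), ∫ x in (0:ℝ)..(2*Real.pi),
        G₀ (x + c*t/ε) t * ψ x t| ≤ (N:ℝ) * (C1*Δ + C2) := hsumbound
    _ = C1*((N:ℝ)*Δ) + (N:ℝ)*C2 := by ring
    _ = C1*T + (N:ℝ)*C2 := by rw [hNΔ]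
    _ ≤ e/2 + e/4 := add_le_add hC1T hNC2
    _ < e := by linarith
  exact hfinal

set_option maxHeartbeats 1000000 in
lemma my_main (T c : ℝ) (hT : 0 < T) (hc : c ≠ 0)
    (g : ℝ → ℝ → ℝ → ℝ)
    (hgc : ∀ ε ∈ Set.Ioi (0:ℝ), Continuous (Function.uncurry (g ε)))
    (hgp : ∀ ε ∈ Set.Ioi (0:ℝ), ∀ t, Function.Periodic (fun x => g ε x t) (2*Real.pi))
    (G : ℝ → ℝ → ℝ) (hGc : Continuous (Function.uncurry G))
    (hGp : ∀ t, Function.Periodic (fun x => G x t) (2*Real.pi))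
    (hconv : ∀ η > 0, ∃ ε' > 0, ∀ ε ∈ Set.Ioc 0 ε', ∀ t ∈ Set.Icc 0 T,
      (∫ x in (0:ℝ)..(2*Real.pi), (g ε x t - G x t)^2) ≤ η)
    (ψ : ℝ → ℝ → ℝ) (hψc : Continuous (Function.uncurry ψ))
    (hψp : ∀ t, Function.Periodic (fun x => ψ x t) (2*Real.pi))
    (hψ0 : ∀ t, (∫ x in (0:ℝ)..(2*Real.pi), ψ x t) = 0) :
    Tendsto (fun ε : ℝ => ∫ t in (0:ℝ)..T, ∫ x in (0:ℝ)..(2*Real.pi),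
        g ε (x + c*t/ε) t * ψ x t) (𝓝[>] (0:ℝ)) (𝓝 0) := by
  have hπ : (0:ℝ) < 2*Real.pi := by positivity
  have hψsect : ∀ t, Continuous (fun x => ψ x t) := fun t =>
    hψc.comp (continuous_id.prodMk continuous_const)
  have hGsect : ∀ t, Continuous (fun y => G y t) := fun t => by
    exact hGc.comp (continuous_id.prodMk continuous_const)
  obtain ⟨Mψ, hMψ0, hMψ⟩ := my_bound ψ T hψc hψp
  set W : ℝ := 2*Real.pi*Mψ^2 with hWdef
  have hW0 : 0 ≤ W := by positivity
  have hosc := my_oscG T c hT hc G hGc hGp ψ hψc hψp hψ0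
  have hdiff : Tendsto (fun ε : ℝ => (∫ t in (0:ℝ)..T, ∫ x in (0:ℝ)..(2*Real.pi),
      g ε (x + c*t/ε) t * ψ x t) - ∫ t in (0:ℝ)..T, ∫ x in (0:ℝ)..(2*Real.pi),
      G (x + c*t/ε) t * ψ x t) (𝓝[>] (0:ℝ)) (𝓝 0) := by
    rw [Metric.tendsto_nhdsWithin_nhds]
    intro e he
    set η : ℝ := (e/2)^2 / (T^2*W + 1) with hηdef
    have hTW0 : (0:ℝ) ≤ T^2*W := by positivity
    have hη : 0 < η := div_pos (by positivity) (by linarith)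
    obtain ⟨ε', hε'0, hconv'⟩ := hconv η hη
    refine ⟨ε', hε'0, ?_⟩
    intro ε hε hdist
    have hεpos : 0 < ε := hε
    have hεIoc : ε ∈ Set.Ioc 0 ε' := by
      constructor
      · exact hεpos
      · rw [Real.dist_eq, sub_zero, abs_of_pos hεpos] at hdist; linarith
    have hgcε := hgc ε hε
    have hgsect : ∀ t, Continuous (fun y => g ε y t) := fun t => by
      exact hgcε.comp (continuous_id.prodMk continuous_const)
    rw [Real.dist_eq, sub_zero]
    -- the two t-integrands are continuous
    have hIg : Continuous (fun t => ∫ x in (0:ℝ)..(2*Real.pi), g ε (x + c*t/ε) t * ψ x t) := by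
      apply intervalIntegral.continuous_parametric_intervalIntegral_of_continuous'
        (f := fun t x => g ε (x + c*t/ε) t * ψ x t)
      have h2 : (Function.uncurry (fun t x => g ε (x + c*t/ε) t * ψ x t))
          = fun p : ℝ × ℝ => g ε (p.2 + c*p.1/ε) p.1 * ψ p.2 p.1 := by funext p; rfl
      rw [h2]
      exact (hgcε.comp ((continuous_snd.add
        ((continuous_const.mul continuous_fst).div_const ε)).prodMk continuous_fst)).mul
        (hψc.comp (continuous_snd.prodMk continuous_fst))
    have hIG : Continuous (fun t => ∫ x in (0:ℝ)..(2*Real.pi), G (x + c*t/ε) t * ψ x t) := by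
      apply intervalIntegral.continuous_parametric_intervalIntegral_of_continuous'
        (f := fun t x => G (x + c*t/ε) t * ψ x t)
      have h2 : (Function.uncurry (fun t x => G (x + c*t/ε) t * ψ x t))
          = fun p : ℝ × ℝ => G (p.2 + c*p.1/ε) p.1 * ψ p.2 p.1 := by funext p; rfl
      rw [h2]
      exact (hGc.comp ((continuous_snd.add
        ((continuous_const.mul continuous_fst).div_const ε)).prodMk continuous_fst)).mul
        (hψc.comp (continuous_snd.prodMk continuous_fst))
    rw [← intervalIntegral.integral_sub (hIg.intervalIntegrable _ _)
      (hIG.intervalIntegrable _ _)]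
    -- pointwise bound in t
    have hptb : ∀ t ∈ Set.uIoc (0:ℝ) T,
        ‖(∫ x in (0:ℝ)..(2*Real.pi), g ε (x + c*t/ε) t * ψ x t)
          - ∫ x in (0:ℝ)..(2*Real.pi), G (x + c*t/ε) t * ψ x t‖ ≤ Real.sqrt (η * W) := by
      intro t ht
      rw [Set.uIoc_of_le hT.le] at ht
      have htIcc : t ∈ Set.Icc (0:ℝ) T := ⟨ht.1.le, ht.2⟩
      have hc1 : Continuous (fun x : ℝ => g ε (x + c*t/ε) t * ψ x t) := by
        exact ((hgsect t).comp (continuous_id.add continuous_const)).mul (hψsect t)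
      have hc2 : Continuous (fun x : ℝ => G (x + c*t/ε) t * ψ x t) := by
        exact ((hGsect t).comp (continuous_id.add continuous_const)).mul (hψsect t)
      rw [← intervalIntegral.integral_sub (hc1.intervalIntegrable _ _)
        (hc2.intervalIntegrable _ _)]
      have heq : ∀ x : ℝ, g ε (x + c*t/ε) t * ψ x t - G (x + c*t/ε) t * ψ x t
          = (g ε (x + c*t/ε) t - G (x + c*t/ε) t) * ψ x t := fun x => by ring
      simp only [heq]
      rw [Real.norm_eq_abs]
      have hdc : Continuous (fun y : ℝ => g ε y t - G y t) := (hgsect t).sub (hGsect t)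
      have hdcs : Continuous (fun x : ℝ => g ε (x + c*t/ε) t - G (x + c*t/ε) t) := by
        exact hdc.comp (continuous_id.add continuous_const)
      have hcs := my_cs (fun x => g ε (x + c*t/ε) t - G (x + c*t/ε) t) (fun x => ψ x t)
        0 (2*Real.pi) (by positivity) hdcs (hψsect t)
      have hshift2 : (∫ x in (0:ℝ)..(2*Real.pi), (g ε (x + c*t/ε) t - G (x + c*t/ε) t)^2)
          = ∫ y in (0:ℝ)..(2*Real.pi), (g ε y t - G y t)^2 := by
        apply my_shift (fun y => (g ε y t - G y t)^2) (hdc.pow 2) _ (c*t/ε)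
        intro y
        have h1 := hgp ε hε t y
        have h2 := hGp t y
        simp only at h1 h2
        simp only [h1, h2]
      have hb1 : (∫ x in (0:ℝ)..(2*Real.pi), (g ε (x + c*t/ε) t - G (x + c*t/ε) t)^2) ≤ η := by
        rw [hshift2]; exact hconv' ε hεIoc t htIcc
      have hb2 : (∫ x in (0:ℝ)..(2*Real.pi), (ψ x t)^2) ≤ W := by
        rw [hWdef]
        have : (2*Real.pi*Mψ^2) = ∫ _x in (0:ℝ)..(2*Real.pi), Mψ^2 := by
          rw [intervalIntegral.integral_const, smul_eq_mul]; ring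
        rw [this]
        apply intervalIntegral.integral_mono_on (by positivity)
          (((hψsect t).pow 2).intervalIntegrable _ _) (intervalIntegrable_const)
        intro x _
        have := hMψ x t htIcc
        show ψ x t ^ 2 ≤ Mψ ^ 2
        nlinarith [abs_nonneg (ψ x t), sq_abs (ψ x t)]
      have hnn1 : (0:ℝ) ≤ ∫ x in (0:ℝ)..(2*Real.pi), (ψ x t)^2 :=
        intervalIntegral.integral_nonneg (by positivity) (fun x _ => sq_nonneg _)
      have hsq : (∫ x in (0:ℝ)..(2*Real.pi),
          (g ε (x + c*t/ε) t - G (x + c*t/ε) t) * ψ x t)^2 ≤ η * W :=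
        le_trans hcs (mul_le_mul hb1 hb2 hnn1 hη.le)
      exact Real.abs_le_sqrt hsq
    have hnb := intervalIntegral.norm_integral_le_of_norm_le_const hptb
    rw [Real.norm_eq_abs] at hnb
    have hkey : Real.sqrt (η * W) * |T - 0| ≤ e/2 := by
      rw [sub_zero, abs_of_pos hT]
      have h1 : T^2*(η*W) ≤ (e/2)^2 := by
        have h2 : η*(T^2*W+1) = (e/2)^2 := by
          rw [hηdef]; field_simp
        nlinarith [hη.le]
      calc Real.sqrt (η*W) * T = Real.sqrt (T^2*(η*W)) := by
            rw [Real.sqrt_mul (sq_nonneg T), Real.sqrt_sq hT.le]; ring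
      _ ≤ Real.sqrt ((e/2)^2) := Real.sqrt_le_sqrt h1
      _ = e/2 := Real.sqrt_sq (by linarith)
    calc |∫ t in (0:ℝ)..T, ((∫ x in (0:ℝ)..(2*Real.pi), g ε (x + c*t/ε) t * ψ x t)
          - ∫ x in (0:ℝ)..(2*Real.pi), G (x + c*t/ε) t * ψ x t)| ≤ Real.sqrt (η * W) * |T - 0| :=
          hnb
    _ ≤ e/2 := hkey
    _ < e := by linarith
  have hfun : (fun ε : ℝ => ∫ t in (0:ℝ)..T, ∫ x in (0:ℝ)..(2*Real.pi),
      g ε (x + c*t/ε) t * ψ x t)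
      = fun ε : ℝ => ((∫ t in (0:ℝ)..T, ∫ x in (0:ℝ)..(2*Real.pi), g ε (x + c*t/ε) t * ψ x t)
        - ∫ t in (0:ℝ)..T, ∫ x in (0:ℝ)..(2*Real.pi), G (x + c*t/ε) t * ψ x t)
        + ∫ t in (0:ℝ)..T, ∫ x in (0:ℝ)..(2*Real.pi), G (x + c*t/ε) t * ψ x t := by
    funext ε; ring
  rw [hfun]
  have := hdiff.add hosc
  simpa using this

lemma my_sqconv (T : ℝ)
    (g : ℝ → ℝ → ℝ → ℝ) (G : ℝ → ℝ → ℝ)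
    (hgc : ∀ ε ∈ Set.Ioi (0:ℝ), Continuous (Function.uncurry (g ε)))
    (hGc : Continuous (Function.uncurry G))
    (C M : ℝ) (hCb : ∀ ε ∈ Set.Ioi (0:ℝ), ∀ x : ℝ, ∀ t ∈ Set.Icc (0:ℝ) T, |g ε x t| ≤ C)
    (hMb : ∀ x : ℝ, ∀ t ∈ Set.Icc (0:ℝ) T, |G x t| ≤ M)
    (hconv : ∀ η > 0, ∃ ε' > 0, ∀ ε ∈ Set.Ioc (0:ℝ) ε', ∀ t ∈ Set.Icc (0:ℝ) T,
      (∫ x in (0:ℝ)..(2*Real.pi), (g ε x t - G x t)^2) ≤ η) :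
    ∀ η > 0, ∃ ε' > 0, ∀ ε ∈ Set.Ioc (0:ℝ) ε', ∀ t ∈ Set.Icc (0:ℝ) T,
      (∫ x in (0:ℝ)..(2*Real.pi), ((g ε x t)^2 - (G x t)^2)^2) ≤ η := by
  intro η hη
  set K : ℝ := (C+M)^2 + 1 with hKdef
  have hK0 : 0 < K := by positivity
  obtain ⟨ε', hε'0, hc⟩ := hconv (η/K) (by positivity)
  refine ⟨ε', hε'0, fun ε hε t ht => ?_⟩
  have hεIoi : ε ∈ Set.Ioi (0:ℝ) := hε.1
  have hgsect : Continuous (fun x => g ε x t) :=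
    (hgc ε hεIoi).comp (continuous_id.prodMk continuous_const)
  have hGsect : Continuous (fun x => G x t) :=
    hGc.comp (continuous_id.prodMk continuous_const)
  have hpt : ∀ x : ℝ, ((g ε x t)^2 - (G x t)^2)^2 ≤ K * (g ε x t - G x t)^2 := by
    intro x
    have h1 := hCb ε hεIoi x t ht
    have h2 := hMb x t ht
    have h1' := abs_le.mp h1
    have h2' := abs_le.mp h2
    have h3 : (g ε x t + G x t)^2 ≤ (C+M)^2 := by
      nlinarith [h1'.1, h1'.2, h2'.1, h2'.2,
        mul_nonneg (by linarith : (0:ℝ) ≤ C + M - (g ε x t + G x t))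
          (by linarith : (0:ℝ) ≤ C + M + (g ε x t + G x t))]
    have h4 : (g ε x t - G x t)^2 * (g ε x t + G x t)^2
        ≤ (g ε x t - G x t)^2 * (C+M)^2 := mul_le_mul_of_nonneg_left h3 (sq_nonneg _)
    nlinarith [h4, sq_nonneg (g ε x t - G x t)]
  have hmono : (∫ x in (0:ℝ)..(2*Real.pi), ((g ε x t)^2 - (G x t)^2)^2)
      ≤ ∫ x in (0:ℝ)..(2*Real.pi), K * (g ε x t - G x t)^2 := by
    apply intervalIntegral.integral_mono_on (by positivity)
    · exact (((hgsect.pow 2).sub (hGsect.pow 2)).pow 2).intervalIntegrable _ _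
    · exact (continuous_const.mul ((hgsect.sub hGsect).pow 2)).intervalIntegrable _ _
    · intro x _; exact hpt x
  calc (∫ x in (0:ℝ)..(2*Real.pi), ((g ε x t)^2 - (G x t)^2)^2)
      ≤ ∫ x in (0:ℝ)..(2*Real.pi), K * (g ε x t - G x t)^2 := hmono
  _ = K * ∫ x in (0:ℝ)..(2*Real.pi), (g ε x t - G x t)^2 :=
      intervalIntegral.integral_const_mul _ _
  _ ≤ K * (η/K) := mul_le_mul_of_nonneg_left (hc ε hε t ht) hK0.le
  _ = η := by field_simp

set_option maxHeartbeats 1000000 in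
theorem oscillating_terms_vanish
    (s T : ℝ) (hs : 2 ≤ s) (hT : 0 < T)
    -- the filtered unknowns f^ε, b^ε
    (f b : ℝ → ℝ → ℝ → ℝ)
    (hfcont : ∀ ε ∈ Set.Ioi (0:ℝ), Continuous (Function.uncurry (f ε)))
    (hbcont : ∀ ε ∈ Set.Ioi (0:ℝ), Continuous (Function.uncurry (b ε)))
    (hfper : ∀ ε ∈ Set.Ioi (0:ℝ), ∀ t, Function.Periodic (fun x => f ε x t) (2 * Real.pi))
    (hbper : ∀ ε ∈ Set.Ioi (0:ℝ), ∀ t, Function.Periodic (fun x => b ε x t) (2 * Real.pi))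
    -- uniform boundedness in ε (boundedness in C(0,T;H^s))
    (C : ℝ)
    (hfbound : ∀ ε ∈ Set.Ioi (0:ℝ), ∀ x, ∀ t ∈ Set.Icc 0 T, |f ε x t| ≤ C)
    (hbbound : ∀ ε ∈ Set.Ioi (0:ℝ), ∀ x, ∀ t ∈ Set.Icc 0 T, |b ε x t| ≤ C)
    -- the limits F and B: continuous, periodic, zero spatial mean in x
    (F B : ℝ → ℝ → ℝ)
    (hFcont : Continuous (Function.uncurry F)) (hBcont : Continuous (Function.uncurry B))
    (hFper : ∀ t, Function.Periodic (fun x => F x t) (2 * Real.pi))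
    (hBper : ∀ t, Function.Periodic (fun x => B x t) (2 * Real.pi))
    (hFmean : ∀ t ∈ Set.Icc 0 T, (∫ x in (0:ℝ)..(2 * Real.pi), F x t) = 0)
    (hBmean : ∀ t ∈ Set.Icc 0 T, (∫ x in (0:ℝ)..(2 * Real.pi), B x t) = 0)
    -- strong convergence f^ε → F, b^ε → B in L^∞(0,T;L²(T¹))
    (hfconv : ∀ η > 0, ∃ ε' > 0, ∀ ε ∈ Set.Ioc 0 ε', ∀ t ∈ Set.Icc 0 T,
      (∫ x in (0:ℝ)..(2 * Real.pi), (f ε x t - F x t)^2) ≤ η)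
    (hbconv : ∀ η > 0, ∃ ε' > 0, ∀ ε ∈ Set.Ioc 0 ε', ∀ t ∈ Set.Icc 0 T,
      (∫ x in (0:ℝ)..(2 * Real.pi), (b ε x t - B x t)^2) ≤ η) :
    ∀ φ : ℝ → ℝ → ℝ, ContDiff ℝ (⊤ : ℕ∞) (Function.uncurry φ) →
      (∀ t, Function.Periodic (fun x => φ x t) (2 * Real.pi)) →
      (∃ T' < T, 0 ≤ T' ∧ ∀ x t, T' ≤ t → φ x t = 0) →
      -- (i)
      Tendsto (fun ε => ∫ t in (0:ℝ)..T, ∫ x in (0:ℝ)..(2 * Real.pi),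
          b ε (x + 2 * t/ε) t * deriv (fun y => φ y t) x)
        (𝓝[>] (0:ℝ)) (𝓝 0) ∧
      -- (ii)
      Tendsto (fun ε => ∫ t in (0:ℝ)..T, ∫ x in (0:ℝ)..(2 * Real.pi),
          f ε (x - 2 * t/ε) t * deriv (fun y => φ y t) x)
        (𝓝[>] (0:ℝ)) (𝓝 0) ∧
      -- (iii)
      Tendsto (fun ε => ∫ t in (0:ℝ)..T, ∫ x in (0:ℝ)..(2 * Real.pi),
          (b ε (x + 2 * t/ε) t)^2 * deriv (fun y => φ y t) x)
        (𝓝[>] (0:ℝ)) (𝓝 0) ∧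
      -- (iv)
      Tendsto (fun ε => ∫ t in (0:ℝ)..T, ∫ x in (0:ℝ)..(2 * Real.pi),
          (f ε (x - 2 * t/ε) t)^2 * deriv (fun y => φ y t) x)
        (𝓝[>] (0:ℝ)) (𝓝 0) := by
  intro φ hφ hφper _
  -- the test function ψ = ∂ₓφ
  set ψ : ℝ → ℝ → ℝ := fun x t => deriv (fun y => φ y t) x with hψdef
  have hasD : ∀ x t : ℝ, HasDerivAt (fun y => φ y t)
      ((fderiv ℝ (Function.uncurry φ) (x,t)) ((1:ℝ),(0:ℝ))) x := by
    intro x t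
    have hdiff : DifferentiableAt ℝ (Function.uncurry φ) (x,t) :=
      (hφ.differentiable (by simp)).differentiableAt
    have hline : HasDerivAt (fun y : ℝ => ((y, t) : ℝ × ℝ)) ((1:ℝ), (0:ℝ)) x :=
      (hasDerivAt_id x).prodMk (hasDerivAt_const x t)
    exact hdiff.hasFDerivAt.comp_hasDerivAt x hline
  have hψc : Continuous (Function.uncurry ψ) := by
    have heq : Function.uncurry ψ
        = fun p : ℝ × ℝ => (fderiv ℝ (Function.uncurry φ) p) ((1:ℝ),(0:ℝ)) := by
      funext p
      exact (hasD p.1 p.2).deriv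
    rw [heq]
    exact (hφ.continuous_fderiv (by simp)).clm_apply continuous_const
  have hψp : ∀ t, Function.Periodic (fun x => ψ x t) (2 * Real.pi) := by
    intro t x
    have hfun : (fun y => φ (y + 2*Real.pi) t) = (fun y => φ y t) := by
      funext y; exact hφper t y
    have h1 : HasDerivAt (fun y => φ y t)
        ((fderiv ℝ (Function.uncurry φ) (x + 2*Real.pi, t)) ((1:ℝ),(0:ℝ))) (x + 2*Real.pi) :=
      hasD (x + 2*Real.pi) t
    have h2 := h1.comp_add_const x (2*Real.pi)
    rw [hfun] at h2
    show deriv (fun y => φ y t) (x + 2*Real.pi) = deriv (fun y => φ y t) x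
    rw [h1.deriv, h2.deriv]
  have hψ0 : ∀ t, (∫ x in (0:ℝ)..(2*Real.pi), ψ x t) = 0 := by
    intro t
    have hψsect : Continuous (fun x => ψ x t) :=
      hψc.comp (continuous_id.prodMk continuous_const)
    have h1 : (∫ x in (0:ℝ)..(2*Real.pi), ψ x t) = φ (2*Real.pi) t - φ 0 t := by
      apply intervalIntegral.integral_deriv_eq_sub
      · intro x _; exact (hasD x t).differentiableAt
      · exact hψsect.intervalIntegrable _ _
    rw [h1]
    have h2 := hφper t 0
    simp only [zero_add] at h2
    rw [h2, sub_self]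
  have h2ne : (2:ℝ) ≠ 0 := two_ne_zero
  have hm2ne : (-2:ℝ) ≠ 0 := by norm_num
  -- bounds for the limits
  obtain ⟨MB, hMB0, hMBb⟩ := my_bound B T hBcont hBper
  obtain ⟨MF, hMF0, hMFb⟩ := my_bound F T hFcont hFper
  -- squares data
  have hbsqc : ∀ ε ∈ Set.Ioi (0:ℝ), Continuous (Function.uncurry (fun x t => (b ε x t)^2)) :=
    fun ε hε => by exact (hbcont ε hε).pow 2
  have hfsqc : ∀ ε ∈ Set.Ioi (0:ℝ), Continuous (Function.uncurry (fun x t => (f ε x t)^2)) :=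
    fun ε hε => by exact (hfcont ε hε).pow 2
  have hbsqp : ∀ ε ∈ Set.Ioi (0:ℝ), ∀ t,
      Function.Periodic (fun x => (b ε x t)^2) (2 * Real.pi) := by
    intro ε hε t x
    have h := hbper ε hε t x
    simp only at h
    simp only [h]
  have hfsqp : ∀ ε ∈ Set.Ioi (0:ℝ), ∀ t,
      Function.Periodic (fun x => (f ε x t)^2) (2 * Real.pi) := by
    intro ε hε t x
    have h := hfper ε hε t x
    simp only at h
    simp only [h]
  have hBsqc : Continuous (Function.uncurry (fun x t => (B x t)^2)) := by
    exact hBcont.pow 2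
  have hFsqc : Continuous (Function.uncurry (fun x t => (F x t)^2)) := by
    exact hFcont.pow 2
  have hBsqp : ∀ t, Function.Periodic (fun x => (B x t)^2) (2 * Real.pi) := by
    intro t x
    have h := hBper t x
    simp only at h
    simp only [h]
  have hFsqp : ∀ t, Function.Periodic (fun x => (F x t)^2) (2 * Real.pi) := by
    intro t x
    have h := hFper t x
    simp only at h
    simp only [h]
  have hbsqconv := my_sqconv T b B hbcont hBcont C MB hbbound hMBb hbconv
  have hfsqconv := my_sqconv T f F hfcont hFcont C MF hfbound hMFb hfconv
  refine ⟨?_, ?_, ?_, ?_⟩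
  · -- (i)
    have h := my_main T 2 hT h2ne b hbcont hbper B hBcont hBper hbconv ψ hψc hψp hψ0
    exact h
  · -- (ii)
    have h := my_main T (-2) hT hm2ne f hfcont hfper F hFcont hFper hfconv ψ hψc hψp hψ0
    have heq : ∀ (ε x t : ℝ), x + (-2)*t/ε = x - 2*t/ε := fun ε x t => by ring
    simp only [heq] at h
    exact h
  · -- (iii)
    have h := my_main T 2 hT h2ne (fun ε x t => (b ε x t)^2) hbsqc hbsqp
      (fun x t => (B x t)^2) hBsqc hBsqp hbsqconv ψ hψc hψp hψ0
    exact h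
  · -- (iv)
    have h := my_main T (-2) hT hm2ne (fun ε x t => (f ε x t)^2) hfsqc hfsqp
      (fun x t => (F x t)^2) hFsqc hFsqp hfsqconv ψ hψc hψp hψ0
    have heq : ∀ (ε x t : ℝ), x + (-2)*t/ε = x - 2*t/ε := fun ε x t => by ring
    simp only [heq] at h
    exact h
end

section
/- As ε → 0, the oscillating cross terms vanish: ∫₀^T ∫_{T¹} f^ε(x,t) b^ε(x + 2t/ε, t) ∂_x φ(x,t) dx dt → 0 and ∫₀^T ∫_{T¹} b^ε(x,t) f^ε(x − 2t/ε, t) ∂_x φ(x,t) dx dt → 0, for every smooth φ with compact support on T¹ × [0,T). -/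
open Filter Topology
open intervalIntegral MeasureTheory

lemma periodic_deriv' (h : ℝ → ℝ) (c : ℝ) (hp : Function.Periodic h c) :
    Function.Periodic (deriv h) c := by
  intro x
  have he : (fun y => h (y + c)) = h := funext fun y => hp y
  calc deriv h (x + c) = deriv (fun y => h (y + c)) x := (deriv_comp_add_const h c x).symm
    _ = deriv h x := by rw [he]

lemma bound_periodic_compact (h : ℝ → ℝ → ℝ) (hc : Continuous (Function.uncurry h))
    (p : ℝ) (hp : 0 < p) (hper : ∀ t, Function.Periodic (fun x => h x t) p) (a b : ℝ) :
    ∃ M, 0 ≤ M ∧ ∀ x, ∀ t ∈ Set.Icc a b, |h x t| ≤ M := by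
  obtain ⟨c, hcb⟩ := (isCompact_Icc.prod isCompact_Icc :
      IsCompact ((Set.Icc 0 p) ×ˢ (Set.Icc a b))).exists_bound_of_continuousOn hc.continuousOn
  refine ⟨max c 0, le_max_right _ _, fun x t ht => ?_⟩
  obtain ⟨y, hy, hxy⟩ := (hper t).exists_mem_Ico₀ hp x
  have : |h y t| ≤ c := hcb (y, t) ⟨⟨hy.1, hy.2.le⟩, ht⟩
  calc |h x t| = |h y t| := by rw [show h x t = h y t from hxy]
    _ ≤ c := this
    _ ≤ max c 0 := le_max_left _ _

lemma integral_bound_of_periodic_zero_mean (h : ℝ → ℝ) (hc : Continuous h)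
    (p : ℝ) (hp : 0 < p) (hper : Function.Periodic h p)
    (hmean : (∫ x in (0:ℝ)..p, h x) = 0) (M : ℝ) (hM : ∀ x, |h x| ≤ M) (a b : ℝ) :
    |∫ x in a..b, h x| ≤ p * M := by
  have hint : ∀ t₁ t₂ : ℝ, IntervalIntegrable h MeasureTheory.volume t₁ t₂ :=
    fun t₁ t₂ => hc.intervalIntegrable t₁ t₂
  set k : ℤ := ⌊(b - a) / p⌋ with hk
  have h1 : (∫ x in a..(a + k • p), h x) = 0 := by
    rw [hper.intervalIntegral_add_zsmul_eq k a hint]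
    rw [show (∫ x in a..a + p, h x) = ∫ x in (0:ℝ)..0 + p, h x from
      hper.intervalIntegral_add_eq a 0]
    simp [hmean]
  have hsplit : (∫ x in a..b, h x) = (∫ x in a..(a + k • p), h x) + ∫ x in (a + k • p)..b, h x :=
    (integral_add_adjacent_intervals (hint _ _) (hint _ _)).symm
  rw [hsplit, h1, zero_add]
  have hfl1 : (k : ℝ) ≤ (b - a) / p := Int.floor_le _
  have hfl2 : (b - a) / p < k + 1 := Int.lt_floor_add_one _
  have hd1 : 0 ≤ b - (a + k • p) := by
    have := (le_div_iff₀ hp).mp hfl1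
    simp only [zsmul_eq_mul]
    nlinarith
  have hd2 : b - (a + k • p) ≤ p := by
    have := (div_lt_iff₀ hp).mp hfl2
    simp only [zsmul_eq_mul]
    nlinarith
  have hM0 : 0 ≤ M := le_trans (abs_nonneg _) (hM 0)
  calc |∫ x in (a + k • p)..b, h x| ≤ M * |b - (a + k • p)| := by
        rw [← Real.norm_eq_abs]
        apply intervalIntegral.norm_integral_le_of_norm_le_const
        intro x _
        exact hM x
    _ ≤ M * p := by
        rw [abs_of_nonneg hd1]
        exact mul_le_mul_of_nonneg_left hd2 hM0
    _ = p * M := mul_comm _ _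

lemma L1_of_L2 (w : ℝ → ℝ) (hw : Continuous w) (P δ : ℝ) (hP : 0 ≤ P) (hδ : 0 < δ)
    (h2 : (∫ x in (0:ℝ)..P, (w x)^2) ≤ δ^2) :
    (∫ x in (0:ℝ)..P, |w x|) ≤ (1 + P) * δ / 2 := by
  have key : ∀ h : ℝ, |h| ≤ h^2/(2*δ) + δ/2 := by
    intro h
    rw [div_add_div _ _ (by positivity) (by norm_num : (2:ℝ) ≠ 0), le_div_iff₀ (by positivity)]
    nlinarith [sq_nonneg (|h| - δ), sq_abs h, abs_nonneg h]
  have hsq : (0:ℝ) ≤ ∫ x in (0:ℝ)..P, (w x)^2 := by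
    apply intervalIntegral.integral_nonneg hP
    intro x _; positivity
  calc (∫ x in (0:ℝ)..P, |w x|)
      ≤ ∫ x in (0:ℝ)..P, ((w x)^2/(2*δ) + δ/2) := by
        apply intervalIntegral.integral_mono_on hP
        · exact hw.abs.intervalIntegrable _ _
        · exact (((hw.pow 2).div_const _).add continuous_const).intervalIntegrable _ _
        · intro x _; exact key (w x)
    _ = (∫ x in (0:ℝ)..P, (w x)^2)/(2*δ) + (δ/2) * P := by
        rw [intervalIntegral.integral_add (f := fun x => (w x)^2/(2*δ)) (g := fun _ => δ/2) (((hw.pow 2).div_const _).intervalIntegrable _ _)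
          (continuous_const.intervalIntegrable _ _), intervalIntegral.integral_div,
          intervalIntegral.integral_const]
        simp [smul_eq_mul, mul_comm]
    _ ≤ δ^2/(2*δ) + (δ/2) * P := by
        gcongr
    _ = (1 + P) * δ / 2 := by
        field_simp

lemma oscillationAux (T : ℝ) (hT : 0 < T) (p : ℝ) (hp : 0 < p) (g : ℝ → ℝ → ℝ)
    (hg : Continuous (Function.uncurry g)) (hper : ∀ t, Function.Periodic (g t) p)
    (hmean : ∀ t ∈ Set.Icc 0 T, (∫ s in (0:ℝ)..p, g t s) = 0) :
    Filter.Tendsto (fun lam : ℝ => ∫ t in (0:ℝ)..T, g t (lam * t)) Filter.atTop (𝓝 0) := by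
  obtain ⟨M, hM0, hM⟩ := bound_periodic_compact (fun s t => g t s)
      (hg.comp continuous_swap) p hp (fun t => hper t) 0 T
  have hK : IsCompact ((Set.Icc (0:ℝ) T) ×ˢ (Set.Icc (0:ℝ) p)) :=
    isCompact_Icc.prod isCompact_Icc
  have hUC := Metric.uniformContinuousOn_iff.mp
    (hK.uniformContinuousOn_of_continuous hg.continuousOn)
  rw [NormedAddCommGroup.tendsto_nhds_zero]
  intro δ hδ
  have hδ₁ : 0 < δ/(2*(T+1)) := by positivity
  set δ₁ : ℝ := δ/(2*(T+1)) with hδ₁def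
  obtain ⟨d, hd0, hd⟩ := hUC δ₁ hδ₁
  set n : ℕ := ⌈T/d⌉₊ + 1 with hndef
  have hn0 : 0 < n := Nat.succ_pos _
  have hnR : (0:ℝ) < n := Nat.cast_pos.mpr hn0
  have hTd : T/d < n := by
    calc T/d ≤ ⌈T/d⌉₊ := Nat.le_ceil _
      _ < n := by exact_mod_cast Nat.lt_succ_self _
  have hTn : T/n < d := by
    rw [div_lt_iff₀ hnR]
    rw [div_lt_iff₀ hd0] at hTd
    linarith [hTd]
  have hTn0 : 0 ≤ T/n := by positivity
  set a : ℕ → ℝ := fun i => i * (T/n) with hadef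
  have ha0 : a 0 = 0 := by simp [hadef]
  have han : a n = T := by simp only [hadef]; field_simp [hnR.ne']
  have hstep : ∀ i : ℕ, a (i+1) - a i = T/n := by
    intro i; simp only [hadef]; push_cast; ring
  have hmono : ∀ i : ℕ, a i ≤ a (i+1) := fun i => by
    have := hstep i; linarith
  have hmem : ∀ i : ℕ, i ≤ n → a i ∈ Set.Icc (0:ℝ) T := by
    intro i hi
    constructor
    · simp only [hadef]; positivity
    · simp only [hadef]
      calc (i:ℝ) * (T/n) ≤ n * (T/n) := by
            apply mul_le_mul_of_nonneg_right _ hTn0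
            exact_mod_cast hi
        _ = T := by field_simp
  filter_upwards [Filter.eventually_ge_atTop (max 1 (2*n*p*M/δ + 1))] with lam hlam
  have hlam1 : (1:ℝ) ≤ lam := le_trans (le_max_left _ _) hlam
  have hlam2 : 2*n*p*M/δ + 1 ≤ lam := le_trans (le_max_right _ _) hlam
  have hlam0 : (0:ℝ) < lam := lt_of_lt_of_le one_pos hlam1
  have hcont_lam : Continuous fun t => g t (lam*t) :=
    hg.comp (continuous_id.prodMk (continuous_const.mul continuous_id))
  have hint : ∀ i < n, IntervalIntegrable (fun t => g t (lam*t))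
      MeasureTheory.volume (a i) (a (i+1)) := fun i _ => hcont_lam.intervalIntegrable _ _
  have hsum := intervalIntegral.sum_integral_adjacent_intervals hint
  rw [ha0, han] at hsum
  rw [← hsum]
  -- bound each summand
  have hbound : ∀ i ∈ Finset.range n, ‖∫ t in a i..a (i+1), g t (lam*t)‖
      ≤ δ₁ * (T/n) + lam⁻¹ * (p*M) := by
    intro i hi
    rw [Finset.mem_range] at hi
    have hai : a i ∈ Set.Icc (0:ℝ) T := hmem i hi.le
    have hai1 : a (i+1) ∈ Set.Icc (0:ℝ) T := hmem (i+1) hi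
    have hcont_ai : Continuous (g (a i)) :=
      hg.comp (continuous_const.prodMk continuous_id)
    have hint1 : IntervalIntegrable (fun t => g t (lam*t) - g (a i) (lam*t))
        MeasureTheory.volume (a i) (a (i+1)) :=
      (hcont_lam.sub (hcont_ai.comp (continuous_const.mul continuous_id))).intervalIntegrable _ _
    have hint2 : IntervalIntegrable (fun t => g (a i) (lam*t))
        MeasureTheory.volume (a i) (a (i+1)) :=
      (hcont_ai.comp (continuous_const.mul continuous_id)).intervalIntegrable _ _
    have hsplit : (∫ t in a i..a (i+1), g t (lam*t))
        = (∫ t in a i..a (i+1), (g t (lam*t) - g (a i) (lam*t)))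
          + ∫ t in a i..a (i+1), g (a i) (lam*t) := by
      rw [← intervalIntegral.integral_add hint1 hint2]
      congr 1
      funext t
      ring
    rw [hsplit]
    refine le_trans (norm_add_le _ _) (add_le_add ?_ ?_)
    · -- uniform continuity part
      have : ∀ t ∈ Set.uIoc (a i) (a (i+1)), ‖g t (lam*t) - g (a i) (lam*t)‖ ≤ δ₁ := by
        intro t ht
        rw [Set.uIoc_of_le (hmono i)] at ht
        have htI : t ∈ Set.Icc (0:ℝ) T := ⟨le_trans hai.1 ht.1.le, le_trans ht.2 hai1.2⟩
        set s : ℝ := lam * t with hsdef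
        set y : ℝ := s - (⌊s/p⌋ : ℤ) * p with hydef
        have hy1 : 0 ≤ y := by
          have := Int.floor_le (s/p)
          rw [hydef]
          have : (⌊s/p⌋ : ℝ) * p ≤ s := by
            rw [← le_div_iff₀ hp]; exact Int.floor_le _
          linarith
        have hy2 : y ≤ p := by
          have h2 : s/p < ⌊s/p⌋ + 1 := Int.lt_floor_add_one _
          rw [hydef]
          rw [div_lt_iff₀ hp] at h2
          nlinarith
        have hyI : y ∈ Set.Icc (0:ℝ) p := ⟨hy1, hy2⟩
        have hred : ∀ t' : ℝ, g t' y = g t' s := fun t' => (hper t').sub_int_mul_eq _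
        have hdist : dist ((t, y) : ℝ × ℝ) ((a i, y) : ℝ × ℝ) < d := by
          rw [Prod.dist_eq]
          simp only [dist_self]
          rw [Real.dist_eq]
          have h1 : |t - a i| ≤ T/n := by
            rw [abs_of_nonneg (by linarith [ht.1.le] : 0 ≤ t - a i)]
            have := hstep i
            linarith [ht.2]
          calc max |t - a i| 0 ≤ T/n := by
                apply max_le h1 hTn0
            _ < d := hTn
        have := hd (t, y) ⟨htI, hyI⟩ (a i, y) ⟨hai, hyI⟩ hdist
        rw [Function.uncurry, Function.uncurry] at this
        simp only [Real.dist_eq] at this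
        rw [Real.norm_eq_abs]
        rw [← hred t, ← hred (a i)]
        exact this.le
      calc ‖∫ t in a i..a (i+1), (g t (lam*t) - g (a i) (lam*t))‖
          ≤ δ₁ * |a (i+1) - a i| := intervalIntegral.norm_integral_le_of_norm_le_const this
        _ = δ₁ * (T/n) := by rw [hstep i, abs_of_nonneg hTn0]
    · -- oscillation part
      have hcv : (∫ t in a i..a (i+1), g (a i) (lam*t))
          = lam⁻¹ • ∫ u in lam * a i..lam * a (i+1), g (a i) u :=
        intervalIntegral.integral_comp_mul_left (fun u => g (a i) u) hlam0.ne'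
      rw [hcv, norm_smul, Real.norm_eq_abs, abs_of_pos (inv_pos.mpr hlam0), Real.norm_eq_abs]
      apply mul_le_mul_of_nonneg_left _ (inv_pos.mpr hlam0).le
      exact integral_bound_of_periodic_zero_mean (g (a i)) hcont_ai p hp (hper (a i))
        (hmean (a i) hai) M (fun x => hM x (a i) hai) _ _
  calc ‖∑ i ∈ Finset.range n, ∫ t in a i..a (i+1), g t (lam*t)‖
      ≤ ∑ i ∈ Finset.range n, ‖∫ t in a i..a (i+1), g t (lam*t)‖ := norm_sum_le _ _
    _ ≤ ∑ _i ∈ Finset.range n, (δ₁ * (T/n) + lam⁻¹ * (p*M)) :=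
        Finset.sum_le_sum hbound
    _ = n * (δ₁ * (T/n) + lam⁻¹ * (p*M)) := by
        rw [Finset.sum_const, Finset.card_range, nsmul_eq_mul]
    _ = T * δ₁ + n*p*M/lam := by
        have hnn : (n:ℝ) ≠ 0 := hnR.ne'
        have e0 : (n:ℝ) * (T/n) = T := by
          rw [mul_div_assoc']
          exact mul_div_cancel_left₀ T hnn
        have e1 : (n:ℝ) * (δ₁ * (T/n)) = T * δ₁ := by
          calc (n:ℝ) * (δ₁ * (T/n)) = δ₁ * ((n:ℝ) * (T/n)) := by ring
            _ = δ₁ * T := by rw [e0]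
            _ = T * δ₁ := mul_comm _ _
        have e2 : (n:ℝ) * (lam⁻¹ * (p*M)) = n*p*M/lam := by
          rw [div_eq_mul_inv]
          ring
        rw [mul_add, e1, e2]
    _ < δ := by
        have h1 : T * δ₁ < δ/2 := by
          rw [hδ₁def, show T * (δ / (2 * (T + 1))) = T * δ / (2*(T+1)) from by ring,
            div_lt_div_iff₀ (by positivity) (by norm_num : (0:ℝ) < 2)]
          nlinarith
        have h2 : n*p*M/lam < δ/2 := by
          rw [div_lt_iff₀ hlam0]
          have hnpM : 0 ≤ (n:ℝ)*p*M := by positivity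
          have h3 : 2*(n:ℝ)*p*M + δ ≤ lam * δ := by
            have hmm := mul_le_mul_of_nonneg_right hlam2 hδ.le
            rw [add_mul, div_mul_cancel₀ _ (ne_of_gt hδ), one_mul] at hmm
            linarith
          nlinarith
        linarith

lemma main_aux (T : ℝ) (hT : 0 < T)
    (u v : ℝ → ℝ → ℝ → ℝ)
    (hucont : ∀ ε ∈ Set.Ioi (0:ℝ), Continuous (Function.uncurry (u ε)))
    (hvcont : ∀ ε ∈ Set.Ioi (0:ℝ), Continuous (Function.uncurry (v ε)))
    (hvper : ∀ ε ∈ Set.Ioi (0:ℝ), ∀ t, Function.Periodic (fun x => v ε x t) (2 * Real.pi))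
    (C : ℝ)
    (hubound : ∀ ε ∈ Set.Ioi (0:ℝ), ∀ x, ∀ t ∈ Set.Icc 0 T, |u ε x t| ≤ C)
    (hvbound : ∀ ε ∈ Set.Ioi (0:ℝ), ∀ x, ∀ t ∈ Set.Icc 0 T, |v ε x t| ≤ C)
    (U V : ℝ → ℝ → ℝ)
    (hUcont : Continuous (Function.uncurry U)) (hVcont : Continuous (Function.uncurry V))
    (hUper : ∀ t, Function.Periodic (fun x => U x t) (2 * Real.pi))
    (hVper : ∀ t, Function.Periodic (fun x => V x t) (2 * Real.pi))
    (hVmean : ∀ t ∈ Set.Icc 0 T, (∫ x in (0:ℝ)..(2 * Real.pi), V x t) = 0)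
    (huconv : ∀ η > 0, ∃ ε' > 0, ∀ ε ∈ Set.Ioc 0 ε', ∀ t ∈ Set.Icc 0 T,
      (∫ x in (0:ℝ)..(2 * Real.pi), (u ε x t - U x t)^2) ≤ η)
    (hvconv : ∀ η > 0, ∃ ε' > 0, ∀ ε ∈ Set.Ioc 0 ε', ∀ t ∈ Set.Icc 0 T,
      (∫ x in (0:ℝ)..(2 * Real.pi), (v ε x t - V x t)^2) ≤ η)
    (ψ : ℝ → ℝ → ℝ) (hψcont : Continuous (Function.uncurry ψ))
    (hψper : ∀ t, Function.Periodic (fun x => ψ x t) (2 * Real.pi))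
    (c : ℝ) (hc : c ≠ 0) :
    Filter.Tendsto (fun ε => ∫ t in (0:ℝ)..T, ∫ x in (0:ℝ)..(2 * Real.pi),
        u ε x t * v ε (x + c * t / ε) t * ψ x t) (𝓝[>] (0:ℝ)) (𝓝 0) := by
  set P : ℝ := 2 * Real.pi with hPdef
  have hP : 0 < P := by positivity
  have hac : 0 < |c| := abs_pos.mpr hc
  obtain ⟨Mψ, hMψ0, hMψ⟩ := bound_periodic_compact ψ hψcont P hP hψper 0 T
  obtain ⟨MU, hMU0, hMU⟩ := bound_periodic_compact U hUcont P hP hUper 0 T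
  have hC0 : 0 ≤ C :=
    le_trans (abs_nonneg _) (hubound 1 (Set.mem_Ioi.mpr one_pos) 0 0 ⟨le_refl 0, hT.le⟩)
  -- the limiting oscillatory functional
  set g : ℝ → ℝ → ℝ := fun t s => ∫ x in (0:ℝ)..P, U x t * V (x + c * s) t * ψ x t with hgdef
  have hgcont : Continuous (Function.uncurry g) := by
    apply intervalIntegral.continuous_parametric_intervalIntegral_of_continuous'
      (f := fun (q : ℝ × ℝ) (x : ℝ) => U x q.1 * V (x + c * q.2) q.1 * ψ x q.1)
    have h1 : Continuous fun q : (ℝ × ℝ) × ℝ => U q.2 q.1.1 :=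
      hUcont.comp (continuous_snd.prodMk (continuous_fst.fst))
    have h2 : Continuous fun q : (ℝ × ℝ) × ℝ => V (q.2 + c * q.1.2) q.1.1 :=
      hVcont.comp ((continuous_snd.add (continuous_const.mul continuous_fst.snd)).prodMk
        continuous_fst.fst)
    have h3 : Continuous fun q : (ℝ × ℝ) × ℝ => ψ q.2 q.1.1 :=
      hψcont.comp (continuous_snd.prodMk (continuous_fst.fst))
    exact (h1.mul h2).mul h3
  have hcc : c * (P/|c|) = P ∨ c * (P/|c|) = -P := by
    rcases abs_cases c with ⟨h1, _⟩ | ⟨h1, _⟩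
    · left; rw [h1]; field_simp
    · right; rw [h1, div_neg, mul_neg, neg_inj, mul_div_assoc']
      exact mul_div_cancel_left₀ P hc
  have hgper : ∀ t, Function.Periodic (g t) (P/|c|) := by
    intro t s
    show (∫ x in (0:ℝ)..P, U x t * V (x + c * (s + P/|c|)) t * ψ x t)
        = ∫ x in (0:ℝ)..P, U x t * V (x + c * s) t * ψ x t
    apply intervalIntegral.integral_congr
    intro x _
    show U x t * V (x + c * (s + P/|c|)) t * ψ x t = U x t * V (x + c * s) t * ψ x t
    congr 2
    rcases hcc with h | h
    · have e : x + c * (s + P/|c|) = (x + c * s) + P := by rw [mul_add, h]; ring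
      rw [e]
      exact hVper t (x + c * s)
    · have e : x + c * (s + P/|c|) = (x + c * s) - P := by rw [mul_add, h]; ring
      rw [e]
      exact (hVper t).sub_eq (x + c * s)
  have hVintzero : ∀ t ∈ Set.Icc (0:ℝ) T, ∀ x : ℝ,
      (∫ s in (0:ℝ)..(P/|c|), V (x + c * s) t) = 0 := by
    intro t ht x
    have h1 : (∫ s in (0:ℝ)..(P/|c|), V (x + c * s) t)
        = c⁻¹ • ∫ y in (c * 0)..(c * (P/|c|)), V (x + y) t :=
      intervalIntegral.integral_comp_mul_left (fun y => V (x + y) t) hc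
    rw [h1, mul_zero]
    have hfullP : (∫ y in (0:ℝ)..P, V (x + y) t) = 0 := by
      rw [intervalIntegral.integral_comp_add_left (fun y => V y t) x]
      rw [show (∫ y in (x + 0)..(x + P), V y t) = ∫ y in x..(x + P), V y t by rw [add_zero]]
      rw [(hVper t).intervalIntegral_add_eq x 0, zero_add]
      exact hVmean t ht
    rcases hcc with h | h
    · rw [h, hfullP, smul_zero]
    · rw [h]
      have : (∫ y in (0:ℝ)..(-P), V (x + y) t) = - ∫ y in (-P)..(0:ℝ), V (x + y) t :=
        intervalIntegral.integral_symm _ _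
      rw [this]
      have h2 : (∫ y in (-P)..(0:ℝ), V (x + y) t) = ∫ y in (0:ℝ)..P, V (x + y) t := by
        have := (Function.Periodic.intervalIntegral_add_eq
          (f := fun y => V (x + y) t) (T := P) (fun y => by simp [← add_assoc, hVper t (x + y)])
          (-P) 0)
        simpa using this
      rw [h2, hfullP, neg_zero, smul_zero]
  have hgmean : ∀ t ∈ Set.Icc (0:ℝ) T, (∫ s in (0:ℝ)..(P/|c|), g t s) = 0 := by
    intro t ht
    have hp' : 0 < P/|c| := by positivity
    have hHcont : Continuous (Function.uncurry (fun (s x : ℝ) => U x t * V (x + c * s) t * ψ x t)) := by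
      have h1 : Continuous fun q : ℝ × ℝ => U q.2 t :=
        hUcont.comp (continuous_snd.prodMk continuous_const)
      have h2 : Continuous fun q : ℝ × ℝ => V (q.2 + c * q.1) t :=
        hVcont.comp ((continuous_snd.add (continuous_const.mul continuous_fst)).prodMk
          continuous_const)
      have h3 : Continuous fun q : ℝ × ℝ => ψ q.2 t :=
        hψcont.comp (continuous_snd.prodMk continuous_const)
      exact (h1.mul h2).mul h3
    have hInt : MeasureTheory.Integrable
        (Function.uncurry (fun (s x : ℝ) => U x t * V (x + c * s) t * ψ x t))
        ((MeasureTheory.volume.restrict (Set.Ioc 0 (P/|c|))).prod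
          (MeasureTheory.volume.restrict (Set.Ioc 0 P))) := by
      rw [MeasureTheory.Measure.prod_restrict]
      have hK2 : IsCompact ((Set.Icc (0:ℝ) (P/|c|)) ×ˢ (Set.Icc (0:ℝ) P)) :=
        isCompact_Icc.prod isCompact_Icc
      exact MeasureTheory.IntegrableOn.mono_set ((hHcont.continuousOn.integrableOn_compact hK2))
        (Set.prod_mono Set.Ioc_subset_Icc_self Set.Ioc_subset_Icc_self)
    calc (∫ s in (0:ℝ)..(P/|c|), g t s)
        = ∫ s in Set.Ioc (0:ℝ) (P/|c|), ∫ x in Set.Ioc (0:ℝ) P,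
            U x t * V (x + c * s) t * ψ x t := by
          rw [intervalIntegral.integral_of_le hp'.le]
          apply MeasureTheory.setIntegral_congr_fun measurableSet_Ioc
          intro s _
          rw [hgdef]
          exact intervalIntegral.integral_of_le hP.le
      _ = ∫ x in Set.Ioc (0:ℝ) P, ∫ s in Set.Ioc (0:ℝ) (P/|c|),
            U x t * V (x + c * s) t * ψ x t := MeasureTheory.integral_integral_swap hInt
      _ = ∫ _x in Set.Ioc (0:ℝ) P, (0:ℝ) := by
          apply MeasureTheory.setIntegral_congr_fun measurableSet_Ioc
          intro x _
          show (∫ s in Set.Ioc (0:ℝ) (P/|c|), U x t * V (x + c * s) t * ψ x t) = 0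
          have h0 : (∫ s in Set.Ioc (0:ℝ) (P/|c|), U x t * V (x + c * s) t * ψ x t)
              = ∫ s in (0:ℝ)..(P/|c|), U x t * V (x + c * s) t * ψ x t :=
            (intervalIntegral.integral_of_le hp'.le).symm
          rw [h0]
          have e : ∀ s : ℝ, U x t * V (x + c * s) t * ψ x t
              = (U x t * ψ x t) * V (x + c * s) t := fun s => by ring
          simp_rw [e]
          rw [intervalIntegral.integral_const_mul, hVintzero t ht x, mul_zero]
      _ = 0 := by simp
  have hosc := oscillationAux T hT (P/|c|) (by positivity) g hgcont hgper hgmean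
  have hJ : Filter.Tendsto (fun ε : ℝ => ∫ t in (0:ℝ)..T, g t (ε⁻¹ * t))
      (𝓝[>] (0:ℝ)) (𝓝 0) := hosc.comp tendsto_inv_nhdsGT_zero
  rw [NormedAddCommGroup.tendsto_nhds_zero]
  intro δ hδ
  set E : ℝ := T * (Mψ * (C + MU) * (1 + P)) / 2 with hEdef
  have hE0 : 0 ≤ E := by positivity
  set δ₀ : ℝ := δ / (2 * (E + 1)) with hδ₀def
  have hδ₀ : 0 < δ₀ := by positivity
  obtain ⟨ε₁, hε₁, hconvU⟩ := huconv (δ₀^2) (by positivity)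
  obtain ⟨ε₂, hε₂, hconvV⟩ := hvconv (δ₀^2) (by positivity)
  have hJev := (NormedAddCommGroup.tendsto_nhds_zero.mp hJ) (δ/2) (by positivity)
  have hmemIoc : Set.Ioc (0:ℝ) (min ε₁ ε₂) ∈ 𝓝[>] (0:ℝ) :=
    Ioc_mem_nhdsGT (lt_min hε₁ hε₂)
  filter_upwards [hJev, hmemIoc] with ε hJε hεm
  have hε0 : 0 < ε := hεm.1
  have hεI : ε ∈ Set.Ioi (0:ℝ) := hε0
  have hεu : ε ∈ Set.Ioc 0 ε₁ := ⟨hε0, le_trans hεm.2 (min_le_left _ _)⟩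
  have hεv : ε ∈ Set.Ioc 0 ε₂ := ⟨hε0, le_trans hεm.2 (min_le_right _ _)⟩
  have hXcont : Continuous fun t => ∫ x in (0:ℝ)..P,
      u ε x t * v ε (x + c * t / ε) t * ψ x t := by
    apply intervalIntegral.continuous_parametric_intervalIntegral_of_continuous'
      (f := fun (t : ℝ) (x : ℝ) => u ε x t * v ε (x + c * t / ε) t * ψ x t)
    have h1 : Continuous fun q : ℝ × ℝ => u ε q.2 q.1 :=
      (hucont ε hεI).comp (continuous_snd.prodMk continuous_fst)
    have h2 : Continuous fun q : ℝ × ℝ => v ε (q.2 + c * q.1 / ε) q.1 :=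
      (hvcont ε hεI).comp ((continuous_snd.add
        ((continuous_const.mul continuous_fst).div_const ε)).prodMk continuous_fst)
    have h3 : Continuous fun q : ℝ × ℝ => ψ q.2 q.1 :=
      hψcont.comp (continuous_snd.prodMk continuous_fst)
    exact (h1.mul h2).mul h3
  have hYcont : Continuous fun t => g t (ε⁻¹ * t) :=
    hgcont.comp (continuous_id.prodMk (continuous_const.mul continuous_id))
  -- key per-t estimate
  have hkey : ∀ t ∈ Set.uIoc (0:ℝ) T,
      ‖(∫ x in (0:ℝ)..P, u ε x t * v ε (x + c * t / ε) t * ψ x t) - g t (ε⁻¹ * t)‖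
        ≤ Mψ * (C + MU) * (1 + P) * δ₀ / 2 := by
    intro t ht'
    rw [Set.uIoc_of_le hT.le] at ht'
    have ht : t ∈ Set.Icc (0:ℝ) T := ⟨ht'.1.le, ht'.2⟩
    set sh : ℝ := c * t / ε with hshdef
    have hg_eq : g t (ε⁻¹ * t) = ∫ x in (0:ℝ)..P, U x t * V (x + sh) t * ψ x t := by
      show (∫ x in (0:ℝ)..P, U x t * V (x + c * (ε⁻¹ * t)) t * ψ x t) = _
      have e : c * (ε⁻¹ * t) = sh := by rw [hshdef]; ring
      rw [e]
    have hu_t : Continuous fun x => u ε x t :=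
      (hucont ε hεI).comp (continuous_id.prodMk continuous_const)
    have hv_sh : Continuous fun x => v ε (x + sh) t :=
      (hvcont ε hεI).comp ((continuous_id.add continuous_const).prodMk continuous_const)
    have hU_t : Continuous fun x => U x t :=
      hUcont.comp (continuous_id.prodMk continuous_const)
    have hV_sh : Continuous fun x => V (x + sh) t :=
      hVcont.comp ((continuous_id.add continuous_const).prodMk continuous_const)
    have hψ_t : Continuous fun x => ψ x t :=
      hψcont.comp (continuous_id.prodMk continuous_const)
    have hA : Continuous fun x => u ε x t * v ε (x + sh) t * ψ x t := (hu_t.mul hv_sh).mul hψ_t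
    have hA' : Continuous fun x => U x t * V (x + sh) t * ψ x t := (hU_t.mul hV_sh).mul hψ_t
    rw [hg_eq, ← intervalIntegral.integral_sub (hA.intervalIntegrable _ _)
      (hA'.intervalIntegrable _ _), Real.norm_eq_abs]
    refine le_trans (intervalIntegral.abs_integral_le_integral_abs hP.le) ?_
    have hpt : ∀ x ∈ Set.Icc (0:ℝ) P,
        |u ε x t * v ε (x+sh) t * ψ x t - U x t * V (x+sh) t * ψ x t|
        ≤ Mψ * C * |u ε x t - U x t| + Mψ * MU * |v ε (x+sh) t - V (x+sh) t| := by
      intro x _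
      have hb1 : |v ε (x+sh) t| ≤ C := hvbound ε hεI (x+sh) t ht
      have hb2 : |U x t| ≤ MU := hMU x t ht
      have hb3 : |ψ x t| ≤ Mψ := hMψ x t ht
      calc |u ε x t * v ε (x+sh) t * ψ x t - U x t * V (x+sh) t * ψ x t|
          = |(u ε x t - U x t) * v ε (x+sh) t + U x t * (v ε (x+sh) t - V (x+sh) t)| * |ψ x t| := by
            rw [← abs_mul]; congr 1; ring
        _ ≤ (|u ε x t - U x t| * |v ε (x+sh) t| + |U x t| * |v ε (x+sh) t - V (x+sh) t|)
              * |ψ x t| := by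
            apply mul_le_mul_of_nonneg_right _ (abs_nonneg _)
            exact le_trans (abs_add_le _ _) (le_of_eq (by rw [abs_mul, abs_mul]))
        _ ≤ (|u ε x t - U x t| * C + MU * |v ε (x+sh) t - V (x+sh) t|) * Mψ := by
            gcongr
        _ = Mψ * C * |u ε x t - U x t| + Mψ * MU * |v ε (x+sh) t - V (x+sh) t| := by ring
    have hint1 : IntervalIntegrable (fun x => |u ε x t - U x t|)
        MeasureTheory.volume 0 P := ((hu_t.sub hU_t).abs).intervalIntegrable _ _
    have hint2 : IntervalIntegrable (fun x => |v ε (x+sh) t - V (x+sh) t|)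
        MeasureTheory.volume 0 P := ((hv_sh.sub hV_sh).abs).intervalIntegrable _ _
    have hL2u : (∫ x in (0:ℝ)..P, |u ε x t - U x t|) ≤ (1 + P) * δ₀ / 2 :=
      L1_of_L2 _ (hu_t.sub hU_t) P δ₀ hP.le hδ₀ (hconvU ε hεu t ht)
    have hshift : (∫ x in (0:ℝ)..P, |v ε (x+sh) t - V (x+sh) t|)
        = ∫ x in (0:ℝ)..P, |v ε x t - V x t| := by
      have hwper : Function.Periodic (fun x => |v ε x t - V x t|) P := by
        intro x
        simp only
        rw [show v ε (x+P) t = v ε x t from hvper ε hεI t x,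
          show V (x+P) t = V x t from hVper t x]
      calc (∫ x in (0:ℝ)..P, |v ε (x+sh) t - V (x+sh) t|)
          = ∫ x in (0+sh)..(P+sh), |v ε x t - V x t| :=
            intervalIntegral.integral_comp_add_right (fun x => |v ε x t - V x t|) sh
        _ = ∫ x in sh..(sh+P), |v ε x t - V x t| := by rw [zero_add, add_comm P sh]
        _ = ∫ x in (0:ℝ)..(0+P), |v ε x t - V x t| := hwper.intervalIntegral_add_eq sh 0
        _ = ∫ x in (0:ℝ)..P, |v ε x t - V x t| := by rw [zero_add]
    have hL2v : (∫ x in (0:ℝ)..P, |v ε (x+sh) t - V (x+sh) t|) ≤ (1 + P) * δ₀ / 2 := by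
      rw [hshift]
      exact L1_of_L2 _ (((hvcont ε hεI).comp (continuous_id.prodMk continuous_const)).sub
        (hVcont.comp (continuous_id.prodMk continuous_const))) P δ₀ hP.le hδ₀
        (hconvV ε hεv t ht)
    calc (∫ x in (0:ℝ)..P, |u ε x t * v ε (x+sh) t * ψ x t - U x t * V (x+sh) t * ψ x t|)
        ≤ ∫ x in (0:ℝ)..P, (Mψ * C * |u ε x t - U x t|
            + Mψ * MU * |v ε (x+sh) t - V (x+sh) t|) := by
          apply intervalIntegral.integral_mono_on hP.le
            ((hA.sub hA').abs.intervalIntegrable _ _)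
            (((continuous_const.mul (hu_t.sub hU_t).abs).add
              (continuous_const.mul (hv_sh.sub hV_sh).abs)).intervalIntegrable _ _)
          exact hpt
      _ = Mψ * C * (∫ x in (0:ℝ)..P, |u ε x t - U x t|)
            + Mψ * MU * ∫ x in (0:ℝ)..P, |v ε (x+sh) t - V (x+sh) t| := by
          rw [intervalIntegral.integral_add (f := fun x => Mψ * C * |u ε x t - U x t|)
            (g := fun x => Mψ * MU * |v ε (x+sh) t - V (x+sh) t|) ((continuous_const.mul
            (hu_t.sub hU_t).abs).intervalIntegrable _ _)
            ((continuous_const.mul (hv_sh.sub hV_sh).abs).intervalIntegrable _ _),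
            intervalIntegral.integral_const_mul, intervalIntegral.integral_const_mul]
      _ ≤ Mψ * C * ((1 + P) * δ₀ / 2) + Mψ * MU * ((1 + P) * δ₀ / 2) := by
          gcongr
      _ = Mψ * (C + MU) * (1 + P) * δ₀ / 2 := by ring
  -- assemble
  set J : ℝ := ∫ t in (0:ℝ)..T, g t (ε⁻¹ * t) with hJdef
  set I : ℝ := ∫ t in (0:ℝ)..T, ∫ x in (0:ℝ)..P,
      u ε x t * v ε (x + c * t / ε) t * ψ x t with hIdef
  have hsub : I - J = ∫ t in (0:ℝ)..T,
      ((∫ x in (0:ℝ)..P, u ε x t * v ε (x + c * t / ε) t * ψ x t) - g t (ε⁻¹ * t)) :=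
    (intervalIntegral.integral_sub (hXcont.intervalIntegrable _ _)
      (hYcont.intervalIntegrable _ _)).symm
  have hdist : ‖I - J‖ ≤ Mψ * (C + MU) * (1 + P) * δ₀ / 2 * |T - 0| := by
    rw [hsub]
    exact intervalIntegral.norm_integral_le_of_norm_le_const hkey
  have hdist2 : ‖I - J‖ ≤ E * δ₀ := by
    refine le_trans hdist (le_of_eq ?_)
    rw [sub_zero, abs_of_pos hT, hEdef]
    ring
  have hEδ : E * δ₀ < δ / 2 := by
    rw [hδ₀def, show E * (δ / (2 * (E + 1))) = E * δ / (2 * (E + 1)) from by ring,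
      div_lt_div_iff₀ (by positivity) (by norm_num : (0:ℝ) < 2)]
    nlinarith
  have hIJ : I = (I - J) + J := by ring
  calc ‖I‖ = ‖(I - J) + J‖ := by rw [← hIJ]
    _ ≤ ‖I - J‖ + ‖J‖ := norm_add_le _ _
    _ < δ / 2 + δ / 2 := add_lt_add_of_le_of_lt (lt_of_le_of_lt hdist2 hEδ).le hJε
    _ = δ := by ring

/- STATEMENT 10: Vanishing of the oscillating cross terms: for every smooth
test function φ with compact support in T¹ × [0,T), the integrals of
f^ε(x,t) b^ε(x + 2t/ε, t) and b^ε(x,t) f^ε(x - 2t/ε, t) against ∂ₓφ tend to 0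
as ε → 0.  The torus T¹ = ℝ/2πℤ is modelled by
2π-periodic functions on ℝ.  The families f^ε, b^ε are uniformly bounded,
converge strongly (uniformly in t, in L²(T¹)) to their weak-* limits F, B,
and F, B have zero spatial mean for every t. -/
theorem oscillating_cross_terms_vanish
    (s T : ℝ) (hs : 2 ≤ s) (hT : 0 < T)
    -- the filtered unknowns f^ε, b^ε
    (f b : ℝ → ℝ → ℝ → ℝ)
    (hfcont : ∀ ε ∈ Set.Ioi (0:ℝ), Continuous (Function.uncurry (f ε)))
    (hbcont : ∀ ε ∈ Set.Ioi (0:ℝ), Continuous (Function.uncurry (b ε)))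
    (hfper : ∀ ε ∈ Set.Ioi (0:ℝ), ∀ t, Function.Periodic (fun x => f ε x t) (2 * Real.pi))
    (hbper : ∀ ε ∈ Set.Ioi (0:ℝ), ∀ t, Function.Periodic (fun x => b ε x t) (2 * Real.pi))
    -- uniform boundedness in ε (boundedness in C(0,T;H^s))
    (C : ℝ)
    (hfbound : ∀ ε ∈ Set.Ioi (0:ℝ), ∀ x, ∀ t ∈ Set.Icc 0 T, |f ε x t| ≤ C)
    (hbbound : ∀ ε ∈ Set.Ioi (0:ℝ), ∀ x, ∀ t ∈ Set.Icc 0 T, |b ε x t| ≤ C)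
    -- the limits F and B: continuous, periodic, zero spatial mean in x
    (F B : ℝ → ℝ → ℝ)
    (hFcont : Continuous (Function.uncurry F)) (hBcont : Continuous (Function.uncurry B))
    (hFper : ∀ t, Function.Periodic (fun x => F x t) (2 * Real.pi))
    (hBper : ∀ t, Function.Periodic (fun x => B x t) (2 * Real.pi))
    (hFmean : ∀ t ∈ Set.Icc 0 T, (∫ x in (0:ℝ)..(2 * Real.pi), F x t) = 0)
    (hBmean : ∀ t ∈ Set.Icc 0 T, (∫ x in (0:ℝ)..(2 * Real.pi), B x t) = 0)
    -- strong convergence f^ε → F, b^ε → B in L^∞(0,T;L²(T¹))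
    (hfconv : ∀ η > 0, ∃ ε' > 0, ∀ ε ∈ Set.Ioc 0 ε', ∀ t ∈ Set.Icc 0 T,
      (∫ x in (0:ℝ)..(2 * Real.pi), (f ε x t - F x t)^2) ≤ η)
    (hbconv : ∀ η > 0, ∃ ε' > 0, ∀ ε ∈ Set.Ioc 0 ε', ∀ t ∈ Set.Icc 0 T,
      (∫ x in (0:ℝ)..(2 * Real.pi), (b ε x t - B x t)^2) ≤ η) :
    ∀ φ : ℝ → ℝ → ℝ, ContDiff ℝ (⊤ : ℕ∞) (Function.uncurry φ) →
      (∀ t, Function.Periodic (fun x => φ x t) (2 * Real.pi)) →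
      (∃ T' < T, 0 ≤ T' ∧ ∀ x t, T' ≤ t → φ x t = 0) →
      Tendsto (fun ε => ∫ t in (0:ℝ)..T, ∫ x in (0:ℝ)..(2 * Real.pi),
          f ε x t * b ε (x + 2 * t/ε) t * deriv (fun y => φ y t) x)
        (𝓝[>] (0:ℝ)) (𝓝 0) ∧
      Tendsto (fun ε => ∫ t in (0:ℝ)..T, ∫ x in (0:ℝ)..(2 * Real.pi),
          b ε x t * f ε (x - 2 * t/ε) t * deriv (fun y => φ y t) x)
        (𝓝[>] (0:ℝ)) (𝓝 0) := by
  intro φ hφ hφper _hsupp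
  have hψcont : Continuous (Function.uncurry (fun x t => deriv (fun y => φ y t) x)) := by
    have key : ∀ x t : ℝ, deriv (fun y => φ y t) x
        = fderiv ℝ (Function.uncurry φ) (x, t) (1, 0) := by
      intro x t
      have h1 : HasDerivAt (fun y : ℝ => (y, t)) ((1:ℝ), (0:ℝ)) x :=
        (hasDerivAt_id x).prodMk (hasDerivAt_const x t)
      have h2 : HasFDerivAt (Function.uncurry φ) (fderiv ℝ (Function.uncurry φ) (x, t)) (x, t) :=
        (hφ.differentiable (by simp) (x, t)).hasFDerivAt
      exact (h2.comp_hasDerivAt x h1).deriv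
    have he : Function.uncurry (fun x t => deriv (fun y => φ y t) x)
        = fun q : ℝ × ℝ => fderiv ℝ (Function.uncurry φ) q (1, 0) := by
      funext q
      exact key q.1 q.2
    rw [he]
    exact (hφ.continuous_fderiv (by simp)).clm_apply continuous_const
  have hψper : ∀ t, Function.Periodic
      (fun x => (fun x t => deriv (fun y => φ y t) x) x t) (2 * Real.pi) := by
    intro t
    exact periodic_deriv' (fun y => φ y t) (2 * Real.pi) (hφper t)
  constructor
  · exact main_aux T hT f b hfcont hbcont hbper C hfbound hbbound F B hFcont hBcont
      hFper hBper hBmean hfconv hbconv (fun x t => deriv (fun y => φ y t) x)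
      hψcont hψper 2 two_ne_zero
  · have h := main_aux T hT b f hbcont hfcont hfper C hbbound hfbound B F hBcont hFcont
      hBper hFper hFmean hbconv hfconv (fun x t => deriv (fun y => φ y t) x)
      hψcont hψper (-2) (by norm_num)
    simp only [show ∀ (x t ε : ℝ), x - 2 * t / ε = x + -2 * t / ε from fun x t ε => by ring] at h ⊢
    exact h
end

section
/- The Roe finite volume scheme for the scalar conservation law with flux f(q) = α q² + β q is TVD (Total Variation Diminishing): under the CFL condition (k/h) max_i |α(Q_i^n + Q_{i−1}^n) + β| ≤ 1, one has TV(Q^{n+1}) ≤ TV(Q^n) for every n. -/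
/-- Harten's lemma, cyclic version: if the increments satisfy a convex-type
recursion with nonnegative coefficients summing (interface-wise) to 1,
the total variation does not increase. -/
lemma harten_step {N : ℕ} [NeZero N] (L : ℝ) (hL : 0 ≤ L)
    (d d' s : ZMod N → ℝ)
    (hab : ∀ i, L * |s i| ≤ 1)
    (hkey : ∀ i, d' i = (1 - L * |s i|) * d i
        + L * (|s (i+1)| - s (i+1)) / 2 * d (i+1)
        + L * (|s (i-1)| + s (i-1)) / 2 * d (i-1)) :
    ∑ i, |d' i| ≤ ∑ i, |d i| := by
  have hb : ∀ j, 0 ≤ L * (|s j| - s j) / 2 := fun j => by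
    have h1 := le_abs_self (s j)
    have : 0 ≤ |s j| - s j := by linarith
    positivity
  have ha : ∀ j, 0 ≤ L * (|s j| + s j) / 2 := fun j => by
    have h1 := neg_abs_le (s j)
    have : 0 ≤ |s j| + s j := by linarith
    positivity
  have hc : ∀ j, 0 ≤ 1 - L * |s j| := fun j => by linarith [hab j]
  have step : ∑ i, |d' i| ≤ ∑ i, ((1 - L * |s i|) * |d i|
        + L * (|s (i+1)| - s (i+1)) / 2 * |d (i+1)|
        + L * (|s (i-1)| + s (i-1)) / 2 * |d (i-1)|) := by
    apply Finset.sum_le_sum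
    intro i _
    rw [hkey i]
    calc |(1 - L * |s i|) * d i
        + L * (|s (i+1)| - s (i+1)) / 2 * d (i+1)
        + L * (|s (i-1)| + s (i-1)) / 2 * d (i-1)|
        ≤ |(1 - L * |s i|) * d i|
        + |L * (|s (i+1)| - s (i+1)) / 2 * d (i+1)|
        + |L * (|s (i-1)| + s (i-1)) / 2 * d (i-1)| := abs_add_three _ _ _
      _ = (1 - L * |s i|) * |d i|
        + L * (|s (i+1)| - s (i+1)) / 2 * |d (i+1)|
        + L * (|s (i-1)| + s (i-1)) / 2 * |d (i-1)| := by
          rw [abs_mul, abs_mul, abs_mul, abs_of_nonneg (hc i),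
            abs_of_nonneg (hb (i+1)), abs_of_nonneg (ha (i-1))]
  refine step.trans (le_of_eq ?_)
  rw [Finset.sum_add_distrib, Finset.sum_add_distrib]
  have e1 : ∑ i : ZMod N, L * (|s (i+1)| - s (i+1)) / 2 * |d (i+1)|
      = ∑ i : ZMod N, L * (|s i| - s i) / 2 * |d i| :=
    Fintype.sum_equiv (Equiv.addRight (1 : ZMod N)) _ _ (fun i => rfl)
  have e2 : ∑ i : ZMod N, L * (|s (i-1)| + s (i-1)) / 2 * |d (i-1)|
      = ∑ i : ZMod N, L * (|s i| + s i) / 2 * |d i| :=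
    Fintype.sum_equiv (Equiv.subRight (1 : ZMod N)) _ _ (fun i => rfl)
  rw [e1, e2, ← Finset.sum_add_distrib, ← Finset.sum_add_distrib]
  exact Finset.sum_congr rfl (fun i _ => by ring)

/- STATEMENT 12: The Roe finite volume scheme for the scalar conservation law
∂ₜq + ∂ₓ(αq² + βq) = 0 on the torus (periodic indices, modelled by
`ZMod (Nx+1)`) is TVD under the CFL condition (Lemma 6 of the paper). -/
theorem roe_scheme_TVD
    (Nx : ℕ) (α β h k : ℝ) (hh : 0 < h) (hk : 0 < k)
    (hhdef : h = 2 * Real.pi / (Nx + 1))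
    (Q : ℕ → ZMod (Nx + 1) → ℝ)
    -- the Roe scheme with numerical flux
    -- 𝓕(a,b) = (f(a)+f(b))/2 - |α(a+b)+β|(a-b)/2, f(q) = αq² + βq
    (hscheme : ∀ n i, Q (n+1) i = Q n i
      - (k/h) * ((((α * (Q n (i+1))^2 + β * Q n (i+1))
                    + (α * (Q n i)^2 + β * Q n i)) / 2
            - |α * (Q n (i+1) + Q n i) + β| * (Q n (i+1) - Q n i) / 2)
        - (((α * (Q n i)^2 + β * Q n i)
                    + (α * (Q n (i-1))^2 + β * Q n (i-1))) / 2
            - |α * (Q n i + Q n (i-1)) + β| * (Q n i - Q n (i-1)) / 2)))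
    -- the CFL condition (k/h) maxᵢ |α(Qᵢⁿ + Qᵢ₋₁ⁿ) + β| ≤ 1
    (hCFL : ∀ n i, (k/h) * |α * (Q n i + Q n (i-1)) + β| ≤ 1) :
    -- conclusion: total variation diminishing, TV(Q^{n+1}) ≤ TV(Q^n)
    ∀ n, (∑ i : ZMod (Nx + 1), |Q (n+1) i - Q (n+1) (i-1)|)
        ≤ ∑ i : ZMod (Nx + 1), |Q n i - Q n (i-1)| := by
  intro n
  have hL : (0:ℝ) ≤ k / h := le_of_lt (div_pos hk hh)
  refine harten_step (k/h) hL (fun i => Q n i - Q n (i-1))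
    (fun i => Q (n+1) i - Q (n+1) (i-1))
    (fun i => α * (Q n i + Q n (i-1)) + β) (hCFL n) ?_
  intro i
  have h1 := hscheme n i
  have h2 := hscheme n (i-1)
  simp only [sub_add_cancel] at h2
  simp only [add_sub_cancel_right, sub_add_cancel]
  rw [h1, h2]
  ring
end
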